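/- arXiv:1802.01904 — 9 statements merged into one kernel-verified Lean document; each statement's English description precedes it below -/
import Mathlib

section
/- Let d ≥ 1, let t ≥ 0, let S be a set of vectors in ℝ^d, regarded as vectors in ℂ^d with real coordinates, and suppose w ∈ ℂ^d is a unit vector such that |⟨s, w⟩| ≤ t for every s ∈ S (hermitian inner product on ℂ^d). Then there exists a unit vector x ∈ ℝ^d such that |⟨s, x⟩| ≤ √2 · t for every s ∈ S. -/
open scoped InnerProductSpace

/-- The coordinatewise embedding of `ℝ^d` into `ℂ^d`. -/
def embedRC (d : ℕ) : EuclideanSpace ℝ (Fin d) → EuclideanSpace ℂ (Fin d) :=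
  fun x => WithLp.toLp 2 (fun i => (x i : ℂ))

lemma aux_scale (d : ℕ) (t : ℝ) (ht : 0 ≤ t) (S : Set (EuclideanSpace ℝ (Fin d)))
    (y : EuclideanSpace ℝ (Fin d)) (hy : (1:ℝ)/2 ≤ ‖y‖^2)
    (hb : ∀ s ∈ S, |⟪s, y⟫_ℝ| ≤ t) :
    ∃ x : EuclideanSpace ℝ (Fin d), ‖x‖ = 1 ∧
      ∀ s ∈ S, |⟪s, x⟫_ℝ| ≤ Real.sqrt 2 * t := by
  have hy0 : 0 < ‖y‖ := by
    by_contra h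
    push_neg at h
    have : ‖y‖ = 0 := le_antisymm h (norm_nonneg y)
    rw [this] at hy; norm_num at hy
  have hinv : ‖y‖⁻¹ ≤ Real.sqrt 2 := by
    have h1 : Real.sqrt (1/2) ≤ ‖y‖ := by
      calc Real.sqrt (1/2) ≤ Real.sqrt (‖y‖^2) := Real.sqrt_le_sqrt hy
        _ = ‖y‖ := Real.sqrt_sq (norm_nonneg y)
    have h2 : (Real.sqrt 2)⁻¹ ≤ ‖y‖ := by
      rwa [show (1:ℝ)/2 = 2⁻¹ by norm_num, Real.sqrt_inv] at h1
    have h3 : (0:ℝ) < Real.sqrt 2 := by positivity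
    calc ‖y‖⁻¹ ≤ ((Real.sqrt 2)⁻¹)⁻¹ := by
          exact inv_anti₀ (by positivity) h2
      _ = Real.sqrt 2 := inv_inv _
  refine ⟨‖y‖⁻¹ • y, ?_, ?_⟩
  · rw [norm_smul, norm_inv, norm_norm, inv_mul_cancel₀ hy0.ne']
  · intro s hs
    rw [real_inner_smul_right, abs_mul, abs_of_pos (by positivity : (0:ℝ) < ‖y‖⁻¹)]
    exact mul_le_mul hinv (hb s hs) (abs_nonneg _) (Real.sqrt_nonneg 2)

theorem real_witness_from_complex_witness (d : ℕ) (hd : 1 ≤ d) (t : ℝ) (ht : 0 ≤ t)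
    (S : Set (EuclideanSpace ℝ (Fin d)))
    (w : EuclideanSpace ℂ (Fin d)) (hw : ‖w‖ = 1)
    (hSw : ∀ s ∈ S, ‖⟪embedRC d s, w⟫_ℂ‖ ≤ t) :
    ∃ x : EuclideanSpace ℝ (Fin d), ‖x‖ = 1 ∧
      ∀ s ∈ S, |⟪s, x⟫_ℝ| ≤ Real.sqrt 2 * t := by
  set u : EuclideanSpace ℝ (Fin d) := WithLp.toLp 2 (fun i => (w i).re) with hu
  set v : EuclideanSpace ℝ (Fin d) := WithLp.toLp 2 (fun i => (w i).im) with hv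
  have hre : ∀ s : EuclideanSpace ℝ (Fin d), ⟪s, u⟫_ℝ = (⟪embedRC d s, w⟫_ℂ).re := by
    intro s
    simp only [PiLp.inner_apply, RCLike.inner_apply, Complex.re_sum, embedRC,
      Complex.conj_ofReal, Complex.mul_re, Complex.ofReal_re, Complex.ofReal_im,
      RCLike.inner_apply, conj_trivial]
    simp [hu]
  have him : ∀ s : EuclideanSpace ℝ (Fin d), ⟪s, v⟫_ℝ = (⟪embedRC d s, w⟫_ℂ).im := by
    intro s
    simp only [PiLp.inner_apply, RCLike.inner_apply, Complex.im_sum, embedRC,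
      Complex.conj_ofReal, Complex.mul_im, Complex.ofReal_re, Complex.ofReal_im,
      conj_trivial]
    simp [hv]
  have hbu : ∀ s ∈ S, |⟪s, u⟫_ℝ| ≤ t := by
    intro s hs
    rw [hre s]
    exact le_trans (Complex.abs_re_le_norm _) (hSw s hs)
  have hbv : ∀ s ∈ S, |⟪s, v⟫_ℝ| ≤ t := by
    intro s hs
    rw [him s]
    exact le_trans (Complex.abs_im_le_norm _) (hSw s hs)
  have hsum : ‖u‖^2 + ‖v‖^2 = 1 := by
    have h1 : ‖w‖^2 = ∑ i, ‖w i‖^2 := by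
      rw [EuclideanSpace.norm_eq, Real.sq_sqrt (by positivity)]
    have h2 : ‖u‖^2 = ∑ i, (u i)^2 := by
      rw [EuclideanSpace.norm_eq, Real.sq_sqrt (by positivity)]
      simp [sq_abs]
    have h3 : ‖v‖^2 = ∑ i, (v i)^2 := by
      rw [EuclideanSpace.norm_eq, Real.sq_sqrt (by positivity)]
      simp [sq_abs]
    rw [h2, h3, ← Finset.sum_add_distrib]
    have : ∀ i, (u i)^2 + (v i)^2 = ‖w i‖^2 := by
      intro i
      rw [Complex.sq_norm, Complex.normSq_apply]
      simp [hu, hv]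
      ring
    rw [Finset.sum_congr rfl (fun i _ => this i), ← h1, hw]; norm_num
  rcases le_total (‖u‖^2) (‖v‖^2) with h | h
  · exact aux_scale d t ht S v (by linarith) hbv
  · exact aux_scale d t ht S u (by linarith) hbu
end

section
/- There is an absolute constant c > 0 with the following property. For every integer d ≥ 1 there exists a symmetric Borel probability measure μ on the unit sphere S(ℂ^d) such that for every unit vector v ∈ ℂ^d, ∫ sup_{π ∈ S_d} ( Σ_{i=1}^d |v_{π(i)}| · |w_i| )² dμ(w) ≤ (1 + c·log d)^{-1}, where S_d denotes the group of permutations of {1, …, d}. -/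
open scoped InnerProductSpace
open MeasureTheory
open scoped ENNReal

noncomputable instance (d : ℕ) : MeasurableSpace (EuclideanSpace ℂ (Fin d)) := borel _
instance (d : ℕ) : BorelSpace (EuclideanSpace ℂ (Fin d)) := ⟨rfl⟩

namespace GoodSymMeasure

open Finset

lemma integrable_dirac'' {α : Type*} [MeasurableSpace α] [MeasurableSingletonClass α]
    (f : α → ℝ) (a : α) : Integrable f (Measure.dirac a) := by
  have h : (fun _ : α => f a) =ᵐ[Measure.dirac a] f := by
    rw [Filter.EventuallyEq, MeasureTheory.ae_dirac_eq]
    exact Filter.eventually_pure.2 rfl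
  exact (integrable_const (f a)).congr h

lemma map_finset_sum {α β : Type*} [MeasurableSpace α] [MeasurableSpace β]
    {g : α → β} (hg : Measurable g) (s : Finset ℕ) (ν : ℕ → Measure α) :
    Measure.map g (∑ k ∈ s, ν k) = ∑ k ∈ s, Measure.map g (ν k) := by
  classical
  induction s using Finset.induction_on with
  | empty => simp [Measure.map_zero]
  | insert _ _ hns ih =>
      rw [Finset.sum_insert hns, Finset.sum_insert hns, Measure.map_add _ _ hg, ih]

lemma exists_measure (d K : ℕ) (hK : 0 < K) (w : ℕ → EuclideanSpace ℂ (Fin d))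
    (hw : ∀ k < K, ‖w k‖ = 1) :
    ∃ μ : Measure (EuclideanSpace ℂ (Fin d)),
      IsProbabilityMeasure μ ∧ μ {u : EuclideanSpace ℂ (Fin d) | ‖u‖ = 1}ᶜ = 0 ∧
      Measure.map (fun u => -u) μ = μ ∧
      ∀ f : EuclideanSpace ℂ (Fin d) → ℝ, (∀ u, f (-u) = f u) →
        ∫ u, f u ∂μ = (K : ℝ)⁻¹ * ∑ k ∈ Finset.range K, f (w k) := by
  classical
  have hKne : (K:ℝ≥0∞) ≠ 0 := by
    simp only [ne_eq, Nat.cast_eq_zero]; omega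
  have hKtop : (K:ℝ≥0∞) ≠ ⊤ := by simp
  set c : ℝ≥0∞ := (2 * (K:ℝ≥0∞))⁻¹ with hc
  set ν : ℕ → Measure (EuclideanSpace ℂ (Fin d)) :=
    fun k => c • (Measure.dirac (w k) + Measure.dirac (-(w k))) with hν
  refine ⟨∑ k ∈ Finset.range K, ν k, ?_, ?_, ?_, ?_⟩
  · -- probability
    constructor
    rw [Measure.finset_sum_apply]
    have : ∀ k ∈ Finset.range K, ν k Set.univ = c * 2 := by
      intro k _
      rw [hν]
      simp only [Measure.smul_apply, Measure.add_apply, measure_univ, smul_eq_mul]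
      rw [one_add_one_eq_two]
    rw [Finset.sum_congr rfl this, Finset.sum_const, Finset.card_range, nsmul_eq_mul]
    rw [hc, ENNReal.mul_inv (Or.inl (by norm_num)) (Or.inl (by norm_num))]
    calc (K:ℝ≥0∞) * ((2:ℝ≥0∞)⁻¹ * (K:ℝ≥0∞)⁻¹ * 2)
        = ((K:ℝ≥0∞) * (K:ℝ≥0∞)⁻¹) * ((2:ℝ≥0∞) * (2:ℝ≥0∞)⁻¹) := by ring
      _ = 1 := by rw [ENNReal.mul_inv_cancel hKne hKtop,
            ENNReal.mul_inv_cancel (by norm_num) (by norm_num), one_mul]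
  · -- null complement of sphere
    have hSc : MeasurableSet ({u : EuclideanSpace ℂ (Fin d) | ‖u‖ = 1}ᶜ) := by
      apply MeasurableSet.compl
      exact (isClosed_eq (continuous_norm) continuous_const).measurableSet
    rw [Measure.finset_sum_apply]
    have : ∀ k ∈ Finset.range K, ν k ({u : EuclideanSpace ℂ (Fin d) | ‖u‖ = 1}ᶜ) = 0 := by
      intro k hk
      rw [Finset.mem_range] at hk
      rw [hν]
      simp only [Measure.smul_apply, Measure.add_apply, smul_eq_mul]
      rw [Measure.dirac_apply' _ hSc, Measure.dirac_apply' _ hSc]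
      rw [Set.indicator_of_notMem, Set.indicator_of_notMem]
      · simp
      · simp only [Set.mem_compl_iff, Set.mem_setOf_eq, not_not]
        rw [norm_neg]; exact hw k hk
      · simp only [Set.mem_compl_iff, Set.mem_setOf_eq, not_not]
        exact hw k hk
    rw [Finset.sum_congr rfl this, Finset.sum_const]
    simp
  · -- symmetry
    have hneg : Measurable (fun u : EuclideanSpace ℂ (Fin d) => -u) := continuous_neg.measurable
    rw [map_finset_sum hneg]
    refine Finset.sum_congr rfl fun k _ => ?_
    rw [hν, Measure.map_smul, Measure.map_add _ _ hneg,
      Measure.map_dirac' hneg, Measure.map_dirac' hneg, neg_neg, add_comm]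
  · -- integral formula
    intro f hf
    have hint : ∀ k ∈ Finset.range K, Integrable f (ν k) := by
      intro k _
      rw [hν]
      refine Integrable.smul_measure ?_ (by rw [hc]; simp; omega)
      exact Integrable.add_measure (integrable_dirac'' f _) (integrable_dirac'' f _)
    rw [integral_finset_sum_measure hint]
    have : ∀ k ∈ Finset.range K, ∫ u, f u ∂(ν k) = (K:ℝ)⁻¹ * f (w k) := by
      intro k _
      rw [hν]
      simp only
      rw [integral_smul_measure,
        integral_add_measure (integrable_dirac'' f _) (integrable_dirac'' f _),
        integral_dirac, integral_dirac, hf (w k)]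
      rw [hc, smul_eq_mul]
      have : ((2 * (K:ℝ≥0∞))⁻¹).toReal = (2 * (K:ℝ))⁻¹ := by
        rw [ENNReal.toReal_inv]
        norm_num
      rw [this]
      have hKR : (K:ℝ) ≠ 0 := by
        simp only [ne_eq, Nat.cast_eq_zero]; omega
      field_simp
      ring
    rw [Finset.sum_congr rfl this, ← Finset.mul_sum]

lemma card_filter_lt (d n : ℕ) (h : n ≤ d) :
    ((Finset.univ : Finset (Fin d)).filter (fun i : Fin d => (i : ℕ) < n)).card = n := by
  rw [Finset.card_filter]
  rw [Fin.sum_univ_eq_sum_range (fun j => if j < n then 1 else 0)]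
  rw [← Finset.sum_filter]
  have : (Finset.range d).filter (fun a => a < n) = Finset.range n := by
    ext a; simp only [Finset.mem_filter, Finset.mem_range]; omega
  rw [this]
  simp

lemma card_filter_ge (d n : ℕ) (h : n ≤ d) :
    ((Finset.univ : Finset (Fin d)).filter (fun i : Fin d => d - n ≤ (i : ℕ))).card = n := by
  rw [Finset.card_filter]
  rw [Fin.sum_univ_eq_sum_range (fun j => if d - n ≤ j then 1 else 0)]
  rw [← Finset.sum_filter]
  have : (Finset.range d).filter (fun a => d - n ≤ a) = Finset.Ico (d - n) d := by
    ext a; simp only [Finset.mem_filter, Finset.mem_range, Finset.mem_Ico]; omega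
  rw [this]
  simp only [Finset.sum_const, Nat.card_Ico, smul_eq_mul, mul_one]
  omega

lemma selection_le_top (d n : ℕ) (hn1 : 1 ≤ n) (hnd : n ≤ d) (x : Fin d → ℝ)
    (hx0 : ∀ i, 0 ≤ x i) (c : ℝ) (hc : 0 ≤ c) (π : Equiv.Perm (Fin d)) :
    (∑ i : Fin d, x (π i) * (if (i : ℕ) < n then c else 0)) ≤
      c * ∑ i ∈ (Finset.univ : Finset (Fin d)).filter (fun i : Fin d => d - n ≤ (i : ℕ)),
        (x ∘ Tuple.sort x) i := by
  set σ := Tuple.sort x with hσ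
  set y : Fin d → ℝ := x ∘ σ with hy
  have hymono : Monotone y := Tuple.monotone_sort x
  have hy0 : ∀ i, 0 ≤ y i := fun i => hx0 _
  have hdn : d - n < d := by omega
  set t : ℝ := y ⟨d - n, hdn⟩ with ht
  set lowF := (Finset.univ : Finset (Fin d)).filter (fun i : Fin d => (i : ℕ) < n) with hlow
  set topF := (Finset.univ : Finset (Fin d)).filter (fun i : Fin d => d - n ≤ (i : ℕ)) with htop
  -- rewrite LHS
  have step0 : (∑ i : Fin d, x (π i) * (if (i : ℕ) < n then c else 0))
      = (∑ i ∈ lowF, x (π i)) * c := by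
    rw [Finset.sum_mul, hlow, Finset.sum_filter]
    refine Finset.sum_congr rfl fun i _ => ?_
    by_cases hi : (i : ℕ) < n <;> simp [hi]
  rw [step0, mul_comm]
  refine mul_le_mul_of_nonneg_left ?_ hc
  -- main chain
  have h1 : (∑ i ∈ lowF, x (π i)) ≤ ∑ i ∈ lowF, (t + max (x (π i) - t) 0) := by
    refine Finset.sum_le_sum fun i _ => ?_
    have := le_max_left (x (π i) - t) 0
    linarith
  have h2 : ∑ i ∈ lowF, (t + max (x (π i) - t) 0)
      = n * t + ∑ i ∈ lowF, max (x (π i) - t) 0 := by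
    rw [Finset.sum_add_distrib, Finset.sum_const, card_filter_lt d n hnd, nsmul_eq_mul]
  have h3 : ∑ i ∈ lowF, max (x (π i) - t) 0 ≤ ∑ i : Fin d, max (x (π i) - t) 0 := by
    refine Finset.sum_le_sum_of_subset_of_nonneg (Finset.filter_subset _ _) ?_
    intro i _ _; exact le_max_right _ _
  have h4 : ∑ i : Fin d, max (x (π i) - t) 0 = ∑ i : Fin d, max (y i - t) 0 := by
    rw [Equiv.sum_comp π (fun z => max (x z - t) 0)]
    rw [← Equiv.sum_comp σ (fun z => max (x z - t) 0)]
    rfl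
  have h5 : ∑ i : Fin d, max (y i - t) 0 = ∑ i ∈ topF, max (y i - t) 0 := by
    symm
    refine Finset.sum_subset (Finset.filter_subset _ _) ?_
    intro i _ hi
    rw [htop, Finset.mem_filter] at hi
    push_neg at hi
    have hlt : (i : ℕ) < d - n := hi (Finset.mem_univ i)
    have : y i ≤ t := hymono (by simp [Fin.le_def]; omega)
    rw [max_eq_right (by linarith)]
  have h6 : ∑ i ∈ topF, max (y i - t) 0 = (∑ i ∈ topF, y i) - n * t := by
    have : ∀ i ∈ topF, max (y i - t) 0 = y i - t := by
      intro i hi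
      rw [htop, Finset.mem_filter] at hi
      have : t ≤ y i := hymono (by simp [Fin.le_def]; omega)
      rw [max_eq_left]; linarith
    rw [Finset.sum_congr rfl this, Finset.sum_sub_distrib, Finset.sum_const,
      card_filter_ge d n hnd, nsmul_eq_mul]
  linarith

lemma geo1 (k : ℕ) : ∑ j ∈ Finset.range (k+1), (4:ℝ)^j / 4^k ≤ 4/3 := by
  rw [← Finset.sum_div, geom_sum_eq (by norm_num : (4:ℝ) ≠ 1)]
  have h : (0:ℝ) < 4^k := by positivity
  rw [div_div, div_le_div_iff₀ (by positivity) (by norm_num : (0:ℝ) < 3)]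
  have : (4:ℝ)^(k+1) = 4^k * 4 := pow_succ 4 k
  nlinarith

lemma geo2 (m j : ℕ) :
    ∑ k ∈ Finset.range (m+1), (if j ≤ k then (4:ℝ)^j / 4^k else 0) ≤ 4/3 := by
  have hsub : Finset.Ico j (m+1) ⊆ Finset.range (m+1) := by
    intro k hk; rw [Finset.mem_Ico] at hk; exact Finset.mem_range.2 hk.2
  rw [← Finset.sum_subset hsub (fun k hk hk' => by
    rw [Finset.mem_range] at hk; rw [Finset.mem_Ico] at hk'
    rw [if_neg (by omega)])]
  have h1 : ∀ k ∈ Finset.Ico j (m+1), (if j ≤ k then (4:ℝ)^j / 4^k else 0) = 4^j/4^k := by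
    intro k hk; rw [Finset.mem_Ico] at hk; rw [if_pos hk.1]
  rw [Finset.sum_congr rfl h1, Finset.sum_Ico_eq_sum_range]
  have h2 : ∀ t ∈ Finset.range (m+1-j), (4:ℝ)^j/4^(j+t) = (1/4)^t := by
    intro t _
    rw [pow_add, div_pow, one_pow]
    have : (4:ℝ)^j ≠ 0 := by positivity
    field_simp
  rw [Finset.sum_congr rfl h2, geom_sum_eq (by norm_num : (1/4:ℝ) ≠ 1)]
  have hp : (0:ℝ) ≤ (1/4)^(m+1-j) := by positivity
  have he : ((1/4:ℝ)^(m+1-j) - 1)/(1/4 - 1) = (1 - (1/4)^(m+1-j)) * (4/3) := by ring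
  rw [he]; nlinarith

lemma hardy (d m : ℕ) (hdm : 16 ^ m ≤ d) (x : Fin d → ℝ)
    (hx0 : ∀ i, 0 ≤ x i) (hx2 : ∑ i, x i ^ 2 = 1) :
    ∑ k ∈ Finset.range (m + 1),
        (⨆ π : Equiv.Perm (Fin d),
          (∑ i : Fin d, x (π i) * (if (i : ℕ) < 16 ^ k then ((4 : ℝ) ^ k)⁻¹ else 0)) ^ 2)
      ≤ 16 / 9 := by
  have h16 : ∀ k : ℕ, k ≤ m → 16 ^ k ≤ d :=
    fun k hk => le_trans (Nat.pow_le_pow_right (by norm_num) hk) hdm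
  have hd : 0 < d := lt_of_lt_of_le (Nat.pow_pos (n := m) (by norm_num)) hdm
  set σ := Tuple.sort x with hσ
  set y : Fin d → ℝ := x ∘ σ with hy
  have hy0 : ∀ i, 0 ≤ y i := fun i => hx0 _
  have hy2 : (∑ i, y i ^ 2) = 1 := by
    rw [← hx2, ← Equiv.sum_comp σ (fun z => x z ^ 2)]; rfl
  set topF : ℕ → Finset (Fin d) :=
    fun n => Finset.univ.filter (fun i : Fin d => d - n ≤ (i:ℕ)) with htopF
  have htopmono : ∀ a b : ℕ, a ≤ b → topF a ⊆ topF b := by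
    intro a b hab
    intro i hi
    simp only [topF, Finset.mem_filter] at *
    exact ⟨hi.1, by omega⟩
  set blk : ℕ → Finset (Fin d) := fun j =>
    match j with
    | 0 => topF 1
    | (j+1) => topF (16^(j+1)) \ topF (16^j) with hblk
  -- decomposition
  have decomp : ∀ (g : Fin d → ℝ) (k : ℕ),
      ∑ j ∈ Finset.range (k+1), ∑ i ∈ blk j, g i = ∑ i ∈ topF (16^k), g i := by
    intro g k
    induction k with
    | zero => rw [Finset.sum_range_one]; norm_num; rfl
    | succ k ih =>
        rw [Finset.sum_range_succ, ih]
        have hsub : topF (16^k) ⊆ topF (16^(k+1)) :=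
          htopmono _ _ (Nat.pow_le_pow_right (by norm_num) (Nat.le_succ k))
        have := Finset.sum_sdiff (f := g) hsub
        rw [show blk (k+1) = topF (16^(k+1)) \ topF (16^k) from rfl]
        linarith
  -- block cardinalities
  have hcard : ∀ j : ℕ, j ≤ m → ((blk j).card : ℝ) ≤ 16^j := by
    intro j hj
    match j with
    | 0 =>
        rw [show blk 0 = topF 1 from rfl, htopF, card_filter_ge d 1 hd]
        norm_num
    | (j+1) =>
        rw [show blk (j+1) = topF (16^(j+1)) \ topF (16^j) from rfl]
        have h1 : (topF (16^(j+1)) \ topF (16^j)).card ≤ (topF (16^(j+1))).card :=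
          Finset.card_le_card (Finset.sdiff_subset)
        have h2 : (topF (16^(j+1))).card = 16^(j+1) := card_filter_ge d _ (h16 _ hj)
        calc ((topF (16^(j+1)) \ topF (16^j)).card : ℝ) ≤ ((16:ℕ)^(j+1) : ℝ) := by
              exact_mod_cast h1.trans_eq h2
          _ = 16^(j+1) := by push_cast; ring
  -- block ℓ² masses
  set b : ℕ → ℝ := fun j => Real.sqrt (∑ i ∈ blk j, y i ^ 2) with hb
  have hb0 : ∀ j, 0 ≤ b j := fun j => Real.sqrt_nonneg _
  have hbsq : ∀ j, b j ^ 2 = ∑ i ∈ blk j, y i ^ 2 := by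
    intro j
    exact Real.sq_sqrt (Finset.sum_nonneg fun i _ => sq_nonneg _)
  have hbsum : ∑ j ∈ Finset.range (m+1), b j ^ 2 ≤ 1 := by
    rw [Finset.sum_congr rfl (fun j _ => hbsq j), decomp (fun i => y i ^ 2) m, ← hy2]
    exact Finset.sum_le_sum_of_subset_of_nonneg (Finset.filter_subset _ _)
      (fun i _ _ => sq_nonneg _)
  -- per-block sum bound
  have hblkb : ∀ j : ℕ, j ≤ m → ∑ i ∈ blk j, y i ≤ 4^j * b j := by
    intro j hj
    have hcs := Finset.sum_mul_sq_le_sq_mul_sq (blk j) (fun _ => (1:ℝ)) y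
    simp only [one_mul, one_pow, Finset.sum_const, nsmul_eq_mul, mul_one] at hcs
    have hsq : (∑ i ∈ blk j, y i)^2 ≤ (4^j * b j)^2 := by
      have h1 : ((blk j).card : ℝ) * (∑ i ∈ blk j, y i ^2) ≤ 16^j * b j ^2 := by
        rw [hbsq]
        apply mul_le_mul_of_nonneg_right (hcard j hj)
        exact Finset.sum_nonneg fun i _ => sq_nonneg _
      have h2 : ((4:ℝ)^j * b j)^2 = 16^j * b j ^2 := by
        rw [mul_pow, ← pow_mul, mul_comm j 2, pow_mul]; norm_num
      rw [h2]; exact le_trans hcs h1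
    have hS0 : 0 ≤ ∑ i ∈ blk j, y i := Finset.sum_nonneg fun i _ => hy0 i
    have hA0 : 0 ≤ (4:ℝ)^j * b j := by positivity
    exact (pow_le_pow_iff_left₀ hS0 hA0 (by norm_num)).1 hsq
  -- top sums bound
  have hT : ∀ k : ℕ, k ≤ m → ∑ i ∈ topF (16^k), y i ≤ ∑ j ∈ Finset.range (k+1), 4^j * b j := by
    intro k hk
    rw [← decomp y k]
    exact Finset.sum_le_sum fun j hj =>
      hblkb j (le_trans (Nat.lt_succ_iff.1 (Finset.mem_range.1 hj)) hk)
  -- helper for powers of two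
  have h24 : ∀ t : ℕ, (2:ℝ)^t * 2^t = 4^t := fun t => by rw [← mul_pow]; norm_num
  -- main per-k bound
  have hFk : ∀ k : ℕ, k ≤ m →
      (⨆ π : Equiv.Perm (Fin d),
        (∑ i : Fin d, x (π i) * (if (i : ℕ) < 16 ^ k then ((4 : ℝ) ^ k)⁻¹ else 0)) ^ 2)
      ≤ (4/3) * ∑ j ∈ Finset.range (k+1), (4^j/4^k) * b j ^ 2 := by
    intro k hk
    apply ciSup_le
    intro π
    have hsel := selection_le_top d (16^k) (Nat.one_le_pow _ _ (by norm_num)) (h16 k hk)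
      x hx0 (((4:ℝ)^k)⁻¹) (by positivity) π
    have hA : (∑ i : Fin d, x (π i) * (if (i : ℕ) < 16 ^ k then ((4 : ℝ) ^ k)⁻¹ else 0))
        ≤ ((4:ℝ)^k)⁻¹ * ∑ j ∈ Finset.range (k+1), 4^j * b j := by
      refine le_trans hsel ?_
      exact mul_le_mul_of_nonneg_left (hT k hk) (by positivity)
    have hS0 : 0 ≤ ∑ i : Fin d, x (π i) * (if (i : ℕ) < 16 ^ k then ((4 : ℝ) ^ k)⁻¹ else 0) := by
      apply Finset.sum_nonneg
      intro i _
      apply mul_nonneg (hx0 _)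
      split <;> positivity
    have hsq : (∑ i : Fin d, x (π i) * (if (i : ℕ) < 16 ^ k then ((4 : ℝ) ^ k)⁻¹ else 0))^2
        ≤ (((4:ℝ)^k)⁻¹ * ∑ j ∈ Finset.range (k+1), 4^j * b j)^2 := by
      apply pow_le_pow_left₀ hS0 hA
    refine le_trans hsq ?_
    -- Cauchy–Schwarz step
    have hexp : ((4:ℝ)^k)⁻¹ * ∑ j ∈ Finset.range (k+1), 4^j * b j
        = ∑ j ∈ Finset.range (k+1), ((2:ℝ)^j/2^k) * (((2:ℝ)^j/2^k) * b j) := by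
      rw [Finset.mul_sum]
      refine Finset.sum_congr rfl fun j _ => ?_
      have e : (2:ℝ)^j/2^k * ((2:ℝ)^j/2^k * b j) = ((2^j*2^j)/(2^k*2^k)) * b j := by ring
      rw [e, h24 j, h24 k]
      ring
    rw [hexp]
    have hcs := Finset.sum_mul_sq_le_sq_mul_sq (Finset.range (k+1))
      (fun j => (2:ℝ)^j/2^k) (fun j => ((2:ℝ)^j/2^k) * b j)
    have hf2 : ∀ j ∈ Finset.range (k+1), ((2:ℝ)^j/2^k)^2 = 4^j/4^k := by
      intro j _
      rw [div_pow]
      have e1 : ((2:ℝ)^j)^2 = 2^j*2^j := by ring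
      have e2 : ((2:ℝ)^k)^2 = 2^k*2^k := by ring
      rw [e1, e2, h24 j, h24 k]
    have hg2 : ∀ j ∈ Finset.range (k+1), (((2:ℝ)^j/2^k) * b j)^2 = (4^j/4^k) * b j ^2 := by
      intro j hj
      rw [mul_pow, hf2 j hj]
    rw [Finset.sum_congr rfl hf2, Finset.sum_congr rfl hg2] at hcs
    refine le_trans hcs ?_
    apply mul_le_mul_of_nonneg_right (geo1 k)
    apply Finset.sum_nonneg
    intro j _
    positivity
  -- sum over k
  have hsum1 : ∑ k ∈ Finset.range (m + 1),
      (⨆ π : Equiv.Perm (Fin d),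
        (∑ i : Fin d, x (π i) * (if (i : ℕ) < 16 ^ k then ((4 : ℝ) ^ k)⁻¹ else 0)) ^ 2)
      ≤ (4/3) * ∑ k ∈ Finset.range (m+1), ∑ j ∈ Finset.range (k+1), (4^j/4^k) * b j ^ 2 := by
    rw [Finset.mul_sum]
    exact Finset.sum_le_sum fun k hk => hFk k (Nat.lt_succ_iff.1 (Finset.mem_range.1 hk))
  refine le_trans hsum1 ?_
  -- extend inner sums and swap
  have hext : ∀ k ∈ Finset.range (m+1),
      ∑ j ∈ Finset.range (k+1), (4^j/4^k) * b j ^ 2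
      = ∑ j ∈ Finset.range (m+1), (if j ≤ k then ((4:ℝ)^j/4^k) * b j ^2 else 0) := by
    intro k hk
    rw [Finset.mem_range] at hk
    have e1 : ∑ j ∈ Finset.range (k+1), ((4:ℝ)^j/4^k) * b j ^ 2
        = ∑ j ∈ Finset.range (k+1), (if j ≤ k then ((4:ℝ)^j/4^k) * b j ^2 else 0) :=
      Finset.sum_congr rfl (fun j hj => (if_pos (Nat.lt_succ_iff.1 (Finset.mem_range.1 hj))).symm)
    rw [e1]
    exact Finset.sum_subset (Finset.range_subset_range.2 (by omega)) (fun j _ hj' =>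
      if_neg (by rw [Finset.mem_range] at hj'; omega))
  rw [Finset.sum_congr rfl hext, Finset.sum_comm]
  have hinner : ∀ j ∈ Finset.range (m+1),
      ∑ k ∈ Finset.range (m+1), (if j ≤ k then ((4:ℝ)^j/4^k) * b j ^2 else 0)
      ≤ (4/3) * b j ^2 := by
    intro j _
    have he : ∀ k ∈ Finset.range (m+1), (if j ≤ k then ((4:ℝ)^j/4^k) * b j ^2 else 0)
        = (if j ≤ k then ((4:ℝ)^j/4^k) else 0) * b j ^2 := by
      intro k _; split_ifs <;> simp
    rw [Finset.sum_congr rfl he, ← Finset.sum_mul]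
    exact mul_le_mul_of_nonneg_right (geo2 m j) (sq_nonneg _)
  have : ∑ j ∈ Finset.range (m+1), ∑ k ∈ Finset.range (m+1),
      (if j ≤ k then ((4:ℝ)^j/4^k) * b j ^2 else 0)
      ≤ (4/3) * ∑ j ∈ Finset.range (m+1), b j ^2 := by
    rw [Finset.mul_sum]
    exact Finset.sum_le_sum hinner
  have hfin : (4:ℝ)/3 * ((4/3) * ∑ j ∈ Finset.range (m+1), b j ^2) ≤ 16/9 := by
    nlinarith [hbsum]
  calc (4:ℝ)/3 * ∑ j ∈ Finset.range (m+1), ∑ k ∈ Finset.range (m+1),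
      (if j ≤ k then ((4:ℝ)^j/4^k) * b j ^2 else 0)
      ≤ (4/3) * ((4/3) * ∑ j ∈ Finset.range (m+1), b j ^2) := by
        apply mul_le_mul_of_nonneg_left this (by norm_num)
    _ ≤ 16/9 := hfin

lemma scalar_key (dr D p q s E : ℝ) (hD2 : D^2 = dr) (hD1 : 1 ≤ D)
    (hp0 : 0 ≤ p) (hq0 : 0 ≤ q) (hq2 : q^2 = 1 - p^2) (hE0 : 0 ≤ E)
    (hE2 : E^2 = dr - 1) (hs0 : 0 ≤ s) (hsp : s ≤ p + E * q) :
    p^2 + s^2 * dr⁻¹ ≤ 1 + D⁻¹ := by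
  have hD0 : 0 < D := by linarith
  obtain ⟨a1, ha10, ha12⟩ : ∃ a, 0 ≤ a ∧ a^2 = D - 1 :=
    ⟨Real.sqrt (D-1), Real.sqrt_nonneg _, Real.sq_sqrt (by linarith)⟩
  obtain ⟨b1, hb10, hb12⟩ : ∃ b, 0 ≤ b ∧ b^2 = D + 1 :=
    ⟨Real.sqrt (D+1), Real.sqrt_nonneg _, Real.sq_sqrt (by linarith)⟩
  have hab2 : (a1*b1)^2 = E^2 := by rw [mul_pow, ha12, hb12, hE2, ← hD2]; ring
  have hab : a1 * b1 = E := by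
    rw [← Real.sqrt_sq (mul_nonneg ha10 hb10), hab2, Real.sqrt_sq hE0]
  have hkey1 : 2 * (E * (p * q)) ≤ (D - 1) * p^2 + (D + 1) * q^2 := by
    have hab' : E * (p*q) = (a1*p)*(b1*q) := by rw [← hab]; ring
    have e1 : a1^2*p^2 = (D-1)*p^2 := by rw [ha12]
    have e2 : b1^2*q^2 = (D+1)*q^2 := by rw [hb12]
    nlinarith [sq_nonneg (a1*p - b1*q), e1, e2, hab']
  have hs2 : s^2 ≤ D * p^2 + (D + dr) * q^2 := by
    have h0 : 0 ≤ p + E * q := by positivity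
    have h1 : s^2 ≤ (p + E*q)^2 := by nlinarith
    nlinarith [hE2]
  have hu : D * D⁻¹ = 1 := mul_inv_cancel₀ (ne_of_gt hD0)
  have hdinv : dr⁻¹ = D⁻¹ * D⁻¹ := by
    rw [← mul_inv, ← hD2]; ring_nf
  rw [hdinv]
  have hDi0 : 0 ≤ D⁻¹ := by positivity
  have hmul := mul_le_mul_of_nonneg_right hs2 (mul_nonneg hDi0 hDi0)
  have e1 : (D * p^2 + (D + dr) * q^2) * (D⁻¹ * D⁻¹)
      = p^2 * (D * D⁻¹) * D⁻¹ + q^2 * (D * D⁻¹) * D⁻¹ + q^2 * (dr * (D⁻¹ * D⁻¹)) := by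
    ring
  have e2 : dr * (D⁻¹ * D⁻¹) = 1 := by
    rw [← hD2]
    calc D^2 * (D⁻¹ * D⁻¹) = (D * D⁻¹) * (D * D⁻¹) := by ring
      _ = 1 := by rw [hu]; ring
  rw [e1, e2, hu] at hmul
  nlinarith [hq2]

lemma small_key (d : ℕ) (hd : 1 ≤ d) (x : Fin d → ℝ)
    (hx0 : ∀ i, 0 ≤ x i) (hx2 : ∑ i, x i ^ 2 = 1) :
    (⨆ π : Equiv.Perm (Fin d),
        (∑ i : Fin d, x (π i) * (if (i : ℕ) < 1 then 1 else 0)) ^ 2) +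
      (⨆ π : Equiv.Perm (Fin d),
        (∑ i : Fin d, x (π i) * (Real.sqrt d)⁻¹) ^ 2)
      ≤ 1 + (Real.sqrt d)⁻¹ := by
  have hd0 : (0:ℝ) < d := by exact_mod_cast hd
  have hd1 : (1:ℝ) ≤ d := by exact_mod_cast hd
  -- maximum entry
  obtain ⟨i0, -, hi0⟩ := Finset.exists_max_image (Finset.univ : Finset (Fin d)) x
    ⟨⟨0, hd⟩, Finset.mem_univ _⟩
  set p := x i0 with hp
  have hp0 : 0 ≤ p := hx0 i0
  set s := ∑ i, x i with hs
  have hs0 : 0 ≤ s := Finset.sum_nonneg fun i _ => hx0 i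
  have hp2 : p^2 ≤ 1 := by
    rw [← hx2]
    exact Finset.single_le_sum (fun i _ => sq_nonneg (x i)) (Finset.mem_univ i0)
  -- first sup ≤ p^2
  have h1 : (⨆ π : Equiv.Perm (Fin d),
      (∑ i : Fin d, x (π i) * (if (i : ℕ) < 1 then 1 else 0)) ^ 2) ≤ p^2 := by
    apply ciSup_le
    intro π
    have he : (∑ i : Fin d, x (π i) * (if (i : ℕ) < 1 then 1 else 0)) = x (π ⟨0, hd⟩) := by
      rw [Finset.sum_eq_single (⟨0, hd⟩ : Fin d)]
      · simp
      · intro i _ hi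
        have : (i : ℕ) ≠ 0 := fun h => hi (Fin.ext h)
        rw [if_neg (by omega), mul_zero]
      · intro h; exact absurd (Finset.mem_univ _) h
    rw [he]
    have := hi0 (π ⟨0, hd⟩) (Finset.mem_univ _)
    have h0 := hx0 (π ⟨0, hd⟩)
    nlinarith
  -- second sup ≤ s^2/d
  have h2 : (⨆ π : Equiv.Perm (Fin d),
      (∑ i : Fin d, x (π i) * (Real.sqrt d)⁻¹) ^ 2) ≤ s^2 * (d:ℝ)⁻¹ := by
    apply ciSup_le
    intro π
    have he : (∑ i : Fin d, x (π i) * (Real.sqrt d)⁻¹) = s * (Real.sqrt d)⁻¹ := by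
      rw [← Finset.sum_mul, hs, Equiv.sum_comp π x]
    rw [he, mul_pow, ← Real.sqrt_inv, Real.sq_sqrt (by positivity)]
  -- Cauchy–Schwarz on the rest
  have herase : s - p = ∑ i ∈ Finset.univ.erase i0, x i := by
    rw [hs, ← Finset.add_sum_erase _ x (Finset.mem_univ i0)]; ring
  have herase2 : ∑ i ∈ Finset.univ.erase i0, x i ^ 2 = 1 - p^2 := by
    rw [← hx2, ← Finset.add_sum_erase _ (fun i => x i ^2) (Finset.mem_univ i0)]; ring
  have hcs := Finset.sum_mul_sq_le_sq_mul_sq (Finset.univ.erase i0) (fun _ => (1:ℝ)) x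
  simp only [one_mul, one_pow, Finset.sum_const, nsmul_eq_mul, mul_one] at hcs
  rw [← herase, herase2, Finset.card_erase_of_mem (Finset.mem_univ i0),
    Finset.card_univ, Fintype.card_fin] at hcs
  -- hcs : (s - p)^2 ≤ (d - 1 : ℕ) * (1 - p^2)   (casts!)
  set D := Real.sqrt d with hD
  have hD0 : 0 < D := Real.sqrt_pos.2 hd0
  have hD2 : D^2 = d := Real.sq_sqrt (le_of_lt hd0)
  have hD1 : 1 ≤ D := by
    rw [hD, show (1:ℝ) = Real.sqrt 1 by simp]
    exact Real.sqrt_le_sqrt (by exact_mod_cast hd)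
  set q := Real.sqrt (1 - p^2) with hq
  have hq0 : 0 ≤ q := Real.sqrt_nonneg _
  have hq2 : q^2 = 1 - p^2 := Real.sq_sqrt (by linarith)
  set E := Real.sqrt ((d:ℝ) - 1) with hE
  have hE0 : 0 ≤ E := Real.sqrt_nonneg _
  have hE2 : E^2 = (d:ℝ) - 1 := Real.sq_sqrt (by linarith)
  have hDd : (d:ℝ) = D * D := by nlinarith [hD2]
  have hcast : ((d - 1 : ℕ) : ℝ) = (d:ℝ) - 1 := by
    push_cast [Nat.cast_sub hd]; ring
  have hr : s - p ≤ E * q := by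
    have h' : (s - p)^2 ≤ ((d:ℝ) - 1) * (1 - p^2) := by
      calc (s-p)^2 ≤ ((d - 1 : ℕ) : ℝ) * (1 - p^2) := hcs
        _ = ((d:ℝ) - 1) * (1 - p^2) := by rw [hcast]
    have h'' : (E * q)^2 = ((d:ℝ) - 1) * (1 - p^2) := by
      rw [mul_pow, hE2, hq2]
    have hsp : 0 ≤ s - p := by rw [herase]; exact Finset.sum_nonneg fun i _ => hx0 i
    exact (pow_le_pow_iff_left₀ hsp (mul_nonneg hE0 hq0) two_ne_zero).1 (h'.trans_eq h''.symm)
  have hgoal : p^2 + s^2 * (d:ℝ)⁻¹ ≤ 1 + D⁻¹ := by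
    refine scalar_key (d:ℝ) D p q s E hD2 hD1 hp0 hq0 hq2 hE0 hE2 hs0 (by linarith)
  linarith [h1, h2, hgoal]

/-- norm of a unit vector gives sum of squares one -/
lemma sum_sq_of_unit {d : ℕ} (v : EuclideanSpace ℂ (Fin d)) (hv : ‖v‖ = 1) :
    ∑ i, ‖v i‖ ^ 2 = 1 := by
  rw [EuclideanSpace.norm_eq] at hv
  have h0 : 0 ≤ ∑ i, ‖v i‖ ^ 2 := Finset.sum_nonneg fun i _ => sq_nonneg _
  nlinarith [Real.sq_sqrt h0, hv]

lemma integrand_neg {d : ℕ} (v : EuclideanSpace ℂ (Fin d)) (u : EuclideanSpace ℂ (Fin d)) :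
    (⨆ π : Equiv.Perm (Fin d), (∑ i : Fin d, ‖v (π i)‖ * ‖(-u) i‖) ^ 2)
      = ⨆ π : Equiv.Perm (Fin d), (∑ i : Fin d, ‖v (π i)‖ * ‖u i‖) ^ 2 := by
  have h : ∀ i : Fin d, ‖(-u) i‖ = ‖u i‖ := fun i => norm_neg (u i)
  simp only [h]

end GoodSymMeasure

open GoodSymMeasure in
theorem exists_good_symmetric_measure_perm :
    ∃ c : ℝ, 0 < c ∧
      ∀ (d : ℕ), 1 ≤ d →
        ∃ μ : Measure (EuclideanSpace ℂ (Fin d)),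
          IsProbabilityMeasure μ ∧
          μ {w | ‖w‖ = 1}ᶜ = 0 ∧
          Measure.map (fun w => -w) μ = μ ∧
          ∀ v : EuclideanSpace ℂ (Fin d), ‖v‖ = 1 →
            ∫ w, (⨆ π : Equiv.Perm (Fin d),
                (∑ i : Fin d, ‖v (π i)‖ * ‖w i‖) ^ 2) ∂μ
              ≤ (1 + c * Real.log d)⁻¹ := by
  refine ⟨1/50, by norm_num, ?_⟩
  intro d hd
  have hdR : (1:ℝ) ≤ d := by exact_mod_cast hd
  have hL0 : 0 ≤ Real.log d := Real.log_nonneg hdR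
  have hX0 : (0:ℝ) < 1 + 1/50 * Real.log d := by positivity
  by_cases hbig : 16 ≤ d
  · -- large dimensions
    set m := Nat.log 16 d with hm
    have hm1 : 1 ≤ m := by
      rw [hm]
      exact (Nat.le_log_iff_pow_le (by norm_num) (by omega)).2 (by simpa using hbig)
    have hpow : 16^m ≤ d := Nat.pow_log_le_self 16 (by omega)
    have hdpow : d < 16^(m+1) := Nat.lt_pow_succ_log_self (by norm_num) d
    set w : ℕ → EuclideanSpace ℂ (Fin d) :=
      fun k => WithLp.toLp 2 (fun i : Fin d =>
        if (i:ℕ) < 16^k then ((((4:ℝ)^k)⁻¹ : ℝ) : ℂ) else 0) with hwdef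
    have hwnorm : ∀ k (i : Fin d),
        ‖w k i‖ = (if (i:ℕ) < 16^k then ((4:ℝ)^k)⁻¹ else 0) := by
      intro k i
      show ‖if (i:ℕ) < 16^k then ((((4:ℝ)^k)⁻¹ : ℝ) : ℂ) else 0‖ = _
      split_ifs
      · rw [Complex.norm_real, Real.norm_eq_abs, abs_of_nonneg (by positivity)]
      · simp
    have hw : ∀ k < m + 1, ‖w k‖ = 1 := by
      intro k hk
      have hkd : 16^k ≤ d :=
        le_trans (Nat.pow_le_pow_right (by norm_num) (by omega)) hpow
      rw [EuclideanSpace.norm_eq]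
      have he : ∀ i : Fin d, ‖w k i‖^2 = (if (i:ℕ) < 16^k then ((16:ℝ)^k)⁻¹ else 0) := by
        intro i
        rw [hwnorm]
        split_ifs
        · rw [inv_pow, ← pow_mul, mul_comm k 2, pow_mul]
          norm_num
        · simp
      rw [Finset.sum_congr rfl (fun i _ => he i), ← Finset.sum_filter,
        Finset.sum_const, card_filter_lt d _ hkd, nsmul_eq_mul]
      push_cast
      rw [mul_inv_cancel₀ (by positivity), Real.sqrt_one]
    obtain ⟨μ, hμ1, hμ2, hμ3, hμ4⟩ := exists_measure d (m+1) (by omega) w hw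
    refine ⟨μ, hμ1, hμ2, hμ3, ?_⟩
    intro v hv
    rw [hμ4 _ (fun u => integrand_neg v u)]
    have hx2 : ∑ i, ‖v i‖ ^ 2 = 1 := sum_sq_of_unit v hv
    have hF : ∀ k ∈ Finset.range (m+1),
        (⨆ π : Equiv.Perm (Fin d), (∑ i : Fin d, ‖v (π i)‖ * ‖w k i‖) ^ 2)
        = ⨆ π : Equiv.Perm (Fin d),
            (∑ i : Fin d, ‖v (π i)‖ * (if (i : ℕ) < 16 ^ k then ((4 : ℝ) ^ k)⁻¹ else 0)) ^ 2 := by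
      intro k _
      simp only [hwnorm]
    rw [Finset.sum_congr rfl hF]
    have hH := hardy d m hpow (fun i => ‖v i‖) (fun i => norm_nonneg _) hx2
    -- arithmetic
    have hM2 : (2:ℝ) ≤ (m+1:ℕ) := by exact_mod_cast Nat.succ_le_succ hm1
    have hlog2 : Real.log 2 < 0.6931471808 := Real.log_two_lt_d9
    have hLle : Real.log d ≤ ((m+1:ℕ):ℝ) * (4 * Real.log 2) := by
      have h1 : (d:ℝ) ≤ ((16:ℝ))^(m+1) := by exact_mod_cast le_of_lt hdpow
      have h2 := Real.log_le_log (by positivity) h1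
      rw [Real.log_pow] at h2
      have h16 : Real.log 16 = 4 * Real.log 2 := by
        rw [show (16:ℝ) = 2^4 by norm_num, Real.log_pow]
        push_cast; ring
      rw [h16] at h2
      exact_mod_cast h2
    have hMX : (16/9) * (1 + 1/50 * Real.log d) ≤ ((m+1:ℕ):ℝ) := by
      have hl2 : 0 ≤ Real.log 2 := Real.log_nonneg (by norm_num)
      nlinarith [hM2, hLle, hlog2, hL0]
    have hMpos : (0:ℝ) < ((m+1:ℕ):ℝ) := by positivity
    calc ((m+1:ℕ):ℝ)⁻¹ * ∑ k ∈ Finset.range (m+1), (⨆ π : Equiv.Perm (Fin d),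
            (∑ i : Fin d, ‖v (π i)‖ * (if (i : ℕ) < 16 ^ k then ((4 : ℝ) ^ k)⁻¹ else 0)) ^ 2)
        ≤ ((m+1:ℕ):ℝ)⁻¹ * (16/9) := by
          exact mul_le_mul_of_nonneg_left hH (by positivity)
      _ ≤ (1 + 1/50 * Real.log d)⁻¹ := by
          rw [inv_eq_one_div (1 + 1/50 * Real.log d), le_div_iff₀ hX0]
          calc ((m+1:ℕ):ℝ)⁻¹ * (16/9) * (1 + 1/50 * Real.log d)
              = ((m+1:ℕ):ℝ)⁻¹ * ((16/9) * (1 + 1/50 * Real.log d)) := by ring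
            _ ≤ ((m+1:ℕ):ℝ)⁻¹ * ((m+1:ℕ):ℝ) := by
                exact mul_le_mul_of_nonneg_left hMX (by positivity)
            _ = 1 := inv_mul_cancel₀ (ne_of_gt hMpos)
  · -- small dimensions
    push_neg at hbig
    set w : ℕ → EuclideanSpace ℂ (Fin d) :=
      fun k => WithLp.toLp 2 (fun i : Fin d =>
        if k = 0 then (if (i:ℕ) < 1 then (1:ℂ) else 0)
        else (((Real.sqrt d)⁻¹ : ℝ) : ℂ)) with hwdef
    have hw0norm : ∀ i : Fin d, ‖w 0 i‖ = (if (i:ℕ) < 1 then (1:ℝ) else 0) := by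
      intro i
      show ‖if (0:ℕ) = 0 then (if (i:ℕ) < 1 then (1:ℂ) else 0) else (((Real.sqrt d)⁻¹ : ℝ) : ℂ)‖ = _
      rw [if_pos rfl]
      split_ifs <;> simp
    have hw1norm : ∀ i : Fin d, ‖w 1 i‖ = (Real.sqrt d)⁻¹ := by
      intro i
      show ‖if (1:ℕ) = 0 then (if (i:ℕ) < 1 then (1:ℂ) else 0) else (((Real.sqrt d)⁻¹ : ℝ) : ℂ)‖ = _
      rw [if_neg (by norm_num), Complex.norm_real, Real.norm_eq_abs,
        abs_of_nonneg (by positivity)]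
    have hw : ∀ k < 2, ‖w k‖ = 1 := by
      intro k hk
      interval_cases k
      · rw [EuclideanSpace.norm_eq]
        have he : ∀ i : Fin d, ‖w 0 i‖^2 = (if (i:ℕ) < 1 then (1:ℝ) else 0) := by
          intro i; rw [hw0norm]; split_ifs <;> norm_num
        rw [Finset.sum_congr rfl (fun i _ => he i), ← Finset.sum_filter,
          Finset.sum_const, card_filter_lt d 1 hd, nsmul_eq_mul]
        norm_num
      · rw [EuclideanSpace.norm_eq]
        have he : ∀ i : Fin d, ‖w 1 i‖^2 = (d:ℝ)⁻¹ := by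
          intro i
          rw [hw1norm, ← Real.sqrt_inv, Real.sq_sqrt (by positivity)]
        rw [Finset.sum_congr rfl (fun i _ => he i), Finset.sum_const, Finset.card_univ,
          Fintype.card_fin, nsmul_eq_mul, mul_inv_cancel₀ (by exact_mod_cast (by omega : d ≠ 0)),
          Real.sqrt_one]
    obtain ⟨μ, hμ1, hμ2, hμ3, hμ4⟩ := exists_measure d 2 (by omega) w hw
    refine ⟨μ, hμ1, hμ2, hμ3, ?_⟩
    intro v hv
    rw [hμ4 _ (fun u => integrand_neg v u)]
    have hx2 : ∑ i, ‖v i‖ ^ 2 = 1 := sum_sq_of_unit v hv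
    have hsmall := small_key d hd (fun i => ‖v i‖) (fun i => norm_nonneg _) hx2
    rw [Finset.sum_range_succ, Finset.sum_range_one]
    have hF0 : (⨆ π : Equiv.Perm (Fin d), (∑ i : Fin d, ‖v (π i)‖ * ‖w 0 i‖) ^ 2)
        = ⨆ π : Equiv.Perm (Fin d),
            (∑ i : Fin d, ‖v (π i)‖ * (if (i : ℕ) < 1 then (1:ℝ) else 0)) ^ 2 := by
      simp only [hw0norm]
    have hF1 : (⨆ π : Equiv.Perm (Fin d), (∑ i : Fin d, ‖v (π i)‖ * ‖w 1 i‖) ^ 2)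
        = ⨆ π : Equiv.Perm (Fin d),
            (∑ i : Fin d, ‖v (π i)‖ * (Real.sqrt d)⁻¹) ^ 2 := by
      simp only [hw1norm]
    rw [hF0, hF1]
    -- arithmetic: (1 + 1/√d) * (1 + log d / 50) ≤ 2
    have hkey : (1 + (Real.sqrt d)⁻¹) * (1 + 1/50 * Real.log d) ≤ 2 := by
      rcases eq_or_lt_of_le hd with h1 | h2
      · -- d = 1
        have : d = 1 := h1.symm
        subst this
        simp only [Nat.cast_one, Real.log_one, Real.sqrt_one, inv_one]
        norm_num
      · -- 2 ≤ d
        have hd2 : (2:ℝ) ≤ d := by exact_mod_cast h2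
        have hs2 : (1.41:ℝ) ≤ Real.sqrt d := by
          have : (1.41:ℝ) ≤ Real.sqrt 2 := by
            rw [show (1.41:ℝ) = Real.sqrt (1.41^2) from (Real.sqrt_sq (by norm_num)).symm]
            exact Real.sqrt_le_sqrt (by norm_num)
          exact le_trans this (Real.sqrt_le_sqrt hd2)
        have hinv : (Real.sqrt d)⁻¹ ≤ 0.71 := by
          have h0 : (0:ℝ) < 1.41 := by norm_num
          calc (Real.sqrt d)⁻¹ ≤ (1.41:ℝ)⁻¹ := by
                apply inv_anti₀ h0 hs2
            _ ≤ 0.71 := by norm_num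
        have hlog : Real.log d ≤ 2.7726 := by
          have h1 : (d:ℝ) ≤ 16 := by exact_mod_cast le_of_lt hbig
          have h2' := Real.log_le_log (by positivity) h1
          have h16 : Real.log 16 = 4 * Real.log 2 := by
            rw [show (16:ℝ) = 2^4 by norm_num, Real.log_pow]
            push_cast; ring
          have hlog2 : Real.log 2 < 0.6931471808 := Real.log_two_lt_d9
          nlinarith
        have hspos : (0:ℝ) ≤ (Real.sqrt d)⁻¹ := by positivity
        nlinarith
    calc (2:ℝ)⁻¹ * ((⨆ π : Equiv.Perm (Fin d),
            (∑ i : Fin d, ‖v (π i)‖ * (if (i : ℕ) < 1 then (1:ℝ) else 0)) ^ 2) +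
          (⨆ π : Equiv.Perm (Fin d), (∑ i : Fin d, ‖v (π i)‖ * (Real.sqrt d)⁻¹) ^ 2))
        ≤ 2⁻¹ * (1 + (Real.sqrt d)⁻¹) := by
          exact mul_le_mul_of_nonneg_left hsmall (by norm_num)
      _ ≤ (1 + 1/50 * Real.log d)⁻¹ := by
          rw [inv_eq_one_div (1 + 1/50 * Real.log d), le_div_iff₀ hX0]
          nlinarith [hkey]
end

section
/- There is an absolute constant C > 0 with the following property. For every integer d ≥ 2 there exists a symmetric Borel probability measure μ on the set { w ∈ ℂ^d : ‖w‖ = 1 and w_1 + ⋯ + w_d = 0 } such that for every v ∈ ℂ^d with ‖v‖ = 1 and v_1 + ⋯ + v_d = 0, ∫ sup_{π ∈ S_d} | Σ_{i=1}^d v_{π(i)} · conj(w_i) |² dμ(w) ≤ C / log d. -/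
open scoped InnerProductSpace
open MeasureTheory

open scoped ENNReal


namespace PermZeroSum

variable {d : ℕ}

/-- tie-broken rank of `a i` among the values of `a` (0 = largest). -/
noncomputable def rnk (a : Fin d → ℝ) (i : Fin d) : ℕ :=
  (Finset.univ.filter fun k => a i < a k ∨ (a k = a i ∧ k < i)).card

lemma rnk_lt_rnk (a : Fin d → ℝ) {i k : Fin d}
    (h : a k < a i ∨ (a i = a k ∧ i < k)) : rnk a i < rnk a k := by
  apply Finset.card_lt_card
  rw [Finset.ssubset_iff_of_subset]
  · refine ⟨i, ?_, ?_⟩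
    · simp only [Finset.mem_filter, Finset.mem_univ, true_and]
      rcases h with h | ⟨h1, h2⟩
      · exact Or.inl h
      · exact Or.inr ⟨h1, h2⟩
    · simp only [Finset.mem_filter, Finset.mem_univ, true_and, not_or, not_and, not_lt]
      exact ⟨le_refl _, le_refl _⟩
  · intro m hm
    simp only [Finset.mem_filter, Finset.mem_univ, true_and] at hm ⊢
    rcases h with h | ⟨h1, h2⟩
    · rcases hm with hm | ⟨hm1, hm2⟩
      · exact Or.inl (h.trans hm)
      · exact Or.inl (hm1 ▸ h)
    · rcases hm with hm | ⟨hm1, hm2⟩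
      · exact Or.inl (h1 ▸ hm)
      · exact Or.inr ⟨hm1.trans h1, hm2.trans h2⟩

lemma a_le_of_rnk_lt (a : Fin d → ℝ) {i k : Fin d} (h : rnk a k < rnk a i) : a i ≤ a k := by
  by_contra hc
  push_neg at hc
  exact absurd (rnk_lt_rnk a (Or.inl hc)) (by omega)

lemma rnk_injective (a : Fin d → ℝ) : Function.Injective (rnk a) := by
  intro i k he
  by_contra hik
  rcases lt_trichotomy (a i) (a k) with h | h | h
  · exact absurd (rnk_lt_rnk a (Or.inl h)) (by omega)
  · rcases lt_or_gt_of_ne hik with h2 | h2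
    · exact absurd (rnk_lt_rnk a (Or.inr ⟨h, h2⟩)) (by omega)
    · exact absurd (rnk_lt_rnk a (Or.inr ⟨h.symm, h2⟩)) (by omega)
  · exact absurd (rnk_lt_rnk a (Or.inl h)) (by omega)

lemma rnk_lt_card (a : Fin d → ℝ) (i : Fin d) : rnk a i < d := by
  have hsub : (Finset.univ.filter fun k => a i < a k ∨ (a k = a i ∧ k < i))
      ⊆ Finset.univ.erase i := by
    intro m hm
    simp only [Finset.mem_filter, Finset.mem_univ, true_and] at hm
    refine Finset.mem_erase.mpr ⟨?_, Finset.mem_univ _⟩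
    rintro rfl
    rcases hm with hm | ⟨_, hm⟩
    · exact lt_irrefl _ hm
    · exact lt_irrefl _ hm
  have hle := Finset.card_le_card hsub
  rw [rnk]
  have hcard : (Finset.univ.erase i).card = d - 1 := by
    rw [Finset.card_erase_of_mem (Finset.mem_univ _), Finset.card_univ, Fintype.card_fin]
  have hd : 0 < d := i.pos
  omega

/-- the set of indices of the `n` largest values -/
noncomputable def topset (a : Fin d → ℝ) (n : ℕ) : Finset (Fin d) :=
  Finset.univ.filter fun i => rnk a i < n

lemma image_rnk_univ (a : Fin d → ℝ) :
    Finset.univ.image (rnk a) = Finset.range d := by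
  apply Finset.eq_of_subset_of_card_le
  · intro j hj
    simp only [Finset.mem_image] at hj
    obtain ⟨i, _, rfl⟩ := hj
    exact Finset.mem_range.mpr (rnk_lt_card a i)
  · rw [Finset.card_image_of_injective _ (rnk_injective a), Finset.card_univ,
      Fintype.card_fin, Finset.card_range]

lemma image_rnk_topset (a : Fin d → ℝ) {n : ℕ} (hn : n ≤ d) :
    (topset a n).image (rnk a) = Finset.range n := by
  apply Finset.Subset.antisymm
  · intro j hj
    simp only [Finset.mem_image, topset, Finset.mem_filter] at hj
    obtain ⟨i, ⟨_, hi⟩, rfl⟩ := hj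
    exact Finset.mem_range.mpr hi
  · intro j hj
    have hj' : j ∈ Finset.range d := Finset.mem_range.mpr (lt_of_lt_of_le (Finset.mem_range.mp hj) hn)
    rw [← image_rnk_univ a] at hj'
    simp only [Finset.mem_image] at hj'
    obtain ⟨i, _, rfl⟩ := hj'
    simp only [Finset.mem_image, topset, Finset.mem_filter]
    exact ⟨i, ⟨Finset.mem_univ _, Finset.mem_range.mp hj⟩, rfl⟩

lemma card_topset (a : Fin d → ℝ) {n : ℕ} (hn : n ≤ d) : (topset a n).card = n := by
  rw [← Finset.card_image_of_injective _ (rnk_injective a), image_rnk_topset a hn,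
    Finset.card_range]

/-- any `n`-element subset sum is at most the top-`n` sum -/
lemma sum_le_sum_topset (a : Fin d → ℝ) (ha : ∀ i, 0 ≤ a i) {n : ℕ} (hn : n ≤ d)
    (A : Finset (Fin d)) (hA : A.card = n) :
    ∑ i ∈ A, a i ≤ ∑ i ∈ topset a n, a i := by
  set T := topset a n with hT
  have hTcard : T.card = n := card_topset a hn
  have key : ∀ i ∈ A \ T, ∀ k ∈ T \ A, a i ≤ a k := by
    intro i hi k hk
    rw [Finset.mem_sdiff] at hi hk
    have h1 : ¬ rnk a i < n := by
      have := hi.2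
      simp only [hT, topset, Finset.mem_filter, Finset.mem_univ, true_and] at this
      exact this
    have h2 : rnk a k < n := by
      have := hk.1
      simp only [hT, topset, Finset.mem_filter, Finset.mem_univ, true_and] at this
      exact this
    exact a_le_of_rnk_lt a (by omega)
  have hcards : (A \ T).card = (T \ A).card := by
    have h1 : (A \ T).card + (A ∩ T).card = A.card := Finset.card_sdiff_add_card_inter A T
    have h2 : (T \ A).card + (T ∩ A).card = T.card := Finset.card_sdiff_add_card_inter T A
    have h3 : (A ∩ T).card = (T ∩ A).card := by rw [Finset.inter_comm]
    omega
  have hsum : ∑ i ∈ A \ T, a i ≤ ∑ k ∈ T \ A, a k := by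
    rcases Finset.eq_empty_or_nonempty (T \ A) with he | hne
    · have h0 : (A \ T) = ∅ := Finset.card_eq_zero.mp (by rw [hcards, he, Finset.card_empty])
      rw [h0, he]
    · obtain ⟨k₀, hk₀, hmin⟩ := Finset.exists_min_image (T \ A) a hne
      calc ∑ i ∈ A \ T, a i ≤ (A \ T).card • a k₀ :=
            Finset.sum_le_card_nsmul _ _ _ (fun i hi => key i hi k₀ hk₀)
        _ = (T \ A).card • a k₀ := by rw [hcards]
        _ ≤ ∑ k ∈ T \ A, a k := Finset.card_nsmul_le_sum _ _ _ (fun k hk => hmin k hk)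
  have hsplitA : ∑ i ∈ A, a i = ∑ i ∈ A ∩ T, a i + ∑ i ∈ A \ T, a i := by
    rw [← Finset.sum_filter_add_sum_filter_not A (· ∈ T) a, Finset.filter_mem_eq_inter]
    congr 1
    apply Finset.sum_congr _ (fun _ _ => rfl)
    ext x; simp [Finset.mem_sdiff]
  have hsplitT : ∑ i ∈ T, a i = ∑ i ∈ A ∩ T, a i + ∑ i ∈ T \ A, a i := by
    rw [← Finset.sum_filter_add_sum_filter_not T (· ∈ A) a, Finset.filter_mem_eq_inter,
      Finset.inter_comm]
    congr 1
    apply Finset.sum_congr _ (fun _ _ => rfl)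
    ext x; simp [Finset.mem_sdiff]
  rw [hsplitA, hsplitT]
  exact add_le_add (le_refl _) hsum

end PermZeroSum

namespace PermZeroSum

open Finset

lemma inv_sqrt_le (j : ℕ) :
    (Real.sqrt ((j : ℝ) + 1))⁻¹ ≤ 2 * Real.sqrt ((j : ℝ) + 1) - 2 * Real.sqrt (j : ℝ) := by
  have h1 : Real.sqrt (j : ℝ) * Real.sqrt ((j : ℝ) + 1) ≤ (j : ℝ) + 1/2 := by
    rw [← Real.sqrt_mul (by positivity)]
    have h : (j : ℝ) * ((j : ℝ) + 1) ≤ ((j : ℝ) + 1/2) ^ 2 := by nlinarith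
    calc Real.sqrt ((j:ℝ) * ((j:ℝ)+1)) ≤ Real.sqrt (((j:ℝ) + 1/2)^2) := Real.sqrt_le_sqrt h
      _ = (j:ℝ) + 1/2 := Real.sqrt_sq (by positivity)
  have h2 : Real.sqrt ((j:ℝ)+1) ^ 2 = (j:ℝ) + 1 := Real.sq_sqrt (by positivity)
  have hpos : 0 < Real.sqrt ((j:ℝ)+1) := Real.sqrt_pos.mpr (by positivity)
  rw [inv_le_iff_one_le_mul₀ hpos]
  nlinarith [Real.sqrt_nonneg (j:ℝ)]

lemma sum_inv_sqrt_le (n : ℕ) :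
    ∑ j ∈ range n, (Real.sqrt ((j : ℝ) + 1))⁻¹ ≤ 2 * Real.sqrt (n : ℝ) := by
  have tel : ∑ j ∈ range n, (2 * Real.sqrt ((j:ℝ) + 1) - 2 * Real.sqrt (j:ℝ))
      = 2 * Real.sqrt (n : ℝ) - 2 * Real.sqrt ((0:ℕ) : ℝ) := by
    have h := Finset.sum_range_sub (f := fun j : ℕ => 2 * Real.sqrt (j : ℝ)) n
    simp only [Nat.cast_add, Nat.cast_one] at h
    exact h
  calc ∑ j ∈ range n, (Real.sqrt ((j : ℝ) + 1))⁻¹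
      ≤ ∑ j ∈ range n, (2 * Real.sqrt ((j:ℝ) + 1) - 2 * Real.sqrt (j:ℝ)) :=
        Finset.sum_le_sum fun j _ => inv_sqrt_le j
    _ = 2 * Real.sqrt (n : ℝ) := by rw [tel]; simp

lemma sqrt_two_pow (L : ℕ) : Real.sqrt ((2:ℝ) ^ L) = (Real.sqrt 2) ^ L := by
  have h : ((Real.sqrt 2) ^ L) ^ 2 = (2:ℝ) ^ L := by
    rw [← pow_mul, mul_comm, pow_mul, Real.sq_sqrt (by norm_num)]
  rw [← h, Real.sqrt_sq (by positivity)]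

lemma geom_tail_le (K m : ℕ) :
    ∑ L ∈ (Finset.Icc 1 K).filter (fun L => m < 2 ^ L), ((Real.sqrt 2)⁻¹) ^ L
      ≤ 4 * (Real.sqrt ((m : ℝ) + 1))⁻¹ := by
  have hs2 : (1.4 : ℝ) ≤ Real.sqrt 2 := by
    rw [show (1.4:ℝ) = Real.sqrt (1.4^2) from (Real.sqrt_sq (by norm_num)).symm]
    exact Real.sqrt_le_sqrt (by norm_num)
  have hs2pos : (0:ℝ) < Real.sqrt 2 := by linarith
  set q : ℝ := (Real.sqrt 2)⁻¹ with hq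
  have hq0 : 0 < q := by positivity
  have hq14 : q ≤ (1.4)⁻¹ := by
    rw [hq]
    exact inv_anti₀ (by norm_num) hs2
  have hq1 : q < 1 := lt_of_le_of_lt hq14 (by norm_num)
  have h1q : (0:ℝ) < 1 - q := by linarith
  set S := (Finset.Icc 1 K).filter (fun L => m < 2 ^ L) with hS
  rcases Finset.eq_empty_or_nonempty S with he | hne
  · rw [he]
    simp only [Finset.sum_empty]
    positivity
  · set L₀ := S.min' hne with hL₀
    have hL₀S : L₀ ∈ S := Finset.min'_mem _ _
    have hmem := Finset.mem_filter.mp hL₀S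
    have hm2 : m < 2 ^ L₀ := hmem.2
    have hsub : S ⊆ Finset.Icc L₀ K := by
      intro L hL
      exact Finset.mem_Icc.mpr
        ⟨Finset.min'_le _ _ hL, (Finset.mem_Icc.mp (Finset.mem_filter.mp hL).1).2⟩
    have hgeom : ∀ n : ℕ, ∑ t ∈ range n, q ^ t ≤ (1 - q)⁻¹ := by
      intro n
      have hmul : (∑ t ∈ range n, q ^ t) * (1 - q) = 1 - q ^ n := by
        have h := geom_sum_mul q n
        have h2 : (∑ t ∈ range n, q ^ t) * (1 - q) = -((∑ t ∈ range n, q ^ t) * (q - 1)) := by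
          ring
        rw [h2, h]; ring
      have heq : (∑ t ∈ range n, q ^ t) = (1 - q ^ n) / (1 - q) :=
        (eq_div_iff h1q.ne').mpr hmul
      rw [heq]
      have hnum : 1 - q ^ n ≤ 1 := by nlinarith [pow_nonneg hq0.le n]
      calc (1 - q ^ n)/(1 - q) ≤ 1/(1 - q) := by gcongr
        _ = (1 - q)⁻¹ := one_div _
    have hqL₀ : q ^ L₀ ≤ (Real.sqrt ((m : ℝ) + 1))⁻¹ := by
      have h1 : q ^ L₀ = (Real.sqrt ((2:ℝ) ^ L₀))⁻¹ := by
        rw [hq, inv_pow, sqrt_two_pow]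
      rw [h1]
      apply inv_anti₀ (Real.sqrt_pos.mpr (by positivity))
      apply Real.sqrt_le_sqrt
      have : (m : ℝ) + 1 ≤ ((2:ℕ) ^ L₀ : ℕ) := by
        exact_mod_cast Nat.succ_le_of_lt hm2
      push_cast at this ⊢
      linarith
    have hinv4 : (1 - q)⁻¹ ≤ 4 := by
      have h14 : (1/4 : ℝ) ≤ 1 - q := by
        have : q ≤ (1.4)⁻¹ := hq14
        norm_num at this ⊢
        linarith
      calc (1 - q)⁻¹ ≤ (1/4 : ℝ)⁻¹ := inv_anti₀ (by norm_num) h14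
        _ = 4 := by norm_num
    calc ∑ L ∈ S, q ^ L
        ≤ ∑ L ∈ Finset.Icc L₀ K, q ^ L :=
          Finset.sum_le_sum_of_subset_of_nonneg hsub (fun L _ _ => by positivity)
      _ = ∑ L ∈ Finset.Ico L₀ (K+1), q ^ L := by rw [Finset.Ico_add_one_right_eq_Icc]
      _ = ∑ t ∈ range (K + 1 - L₀), q ^ (L₀ + t) := Finset.sum_Ico_eq_sum_range _ _ _
      _ = q ^ L₀ * ∑ t ∈ range (K + 1 - L₀), q ^ t := by
          simp [pow_add, Finset.mul_sum]
      _ ≤ q ^ L₀ * (1 - q)⁻¹ := by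
          exact mul_le_mul_of_nonneg_left (hgeom _) (pow_nonneg hq0.le _)
      _ ≤ (Real.sqrt ((m : ℝ) + 1))⁻¹ * 4 := by
          apply mul_le_mul hqL₀ hinv4 (by positivity) (by positivity)
      _ = 4 * (Real.sqrt ((m : ℝ) + 1))⁻¹ := mul_comm _ _

end PermZeroSum

namespace PermZeroSum

open Finset

lemma half_mul_sqrt_two : (2:ℝ)⁻¹ * Real.sqrt 2 = (Real.sqrt 2)⁻¹ := by
  have h2 : Real.sqrt 2 * Real.sqrt 2 = 2 := Real.mul_self_sqrt (by norm_num)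
  have hpos : (0:ℝ) < Real.sqrt 2 := Real.sqrt_pos.mpr (by norm_num)
  field_simp
  linear_combination h2

lemma core {d : ℕ} (K : ℕ) (hKd : 2 ^ K ≤ d) (a : Fin d → ℝ)
    (ha : ∀ i, 0 ≤ a i) (ha2 : ∑ i, a i ^ 2 ≤ 1) :
    ∑ L ∈ Finset.Icc 1 K, ((2:ℝ)⁻¹) ^ L * (∑ i ∈ topset a (2 ^ L), a i) ^ 2 ≤ 8 := by
  set q : ℝ := (Real.sqrt 2)⁻¹ with hq
  have hq0 : 0 ≤ q := by positivity
  set h : Fin d → ℝ := fun i => Real.sqrt ((rnk a i : ℝ) + 1) * a i ^ 2 with hh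
  have hh0 : ∀ i, 0 ≤ h i := fun i => by positivity
  -- step 1 : per-scale Cauchy-Schwarz
  have step1 : ∀ L ∈ Finset.Icc 1 K,
      ((2:ℝ)⁻¹) ^ L * (∑ i ∈ topset a (2 ^ L), a i) ^ 2
        ≤ 2 * q ^ L * ∑ i ∈ topset a (2 ^ L), h i := by
    intro L hL
    have hLK : L ≤ K := (Finset.mem_Icc.mp hL).2
    have hn : 2 ^ L ≤ d := (Nat.pow_le_pow_right (by norm_num) hLK).trans hKd
    set T := topset a (2 ^ L) with hT
    set u : Fin d → ℝ := fun i => Real.sqrt ((Real.sqrt ((rnk a i : ℝ) + 1))⁻¹) with hu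
    set v : Fin d → ℝ := fun i => Real.sqrt (Real.sqrt ((rnk a i : ℝ) + 1)) * a i with hv
    have hx : ∀ i : Fin d, (0:ℝ) < Real.sqrt ((rnk a i : ℝ) + 1) := fun i =>
      Real.sqrt_pos.mpr (by positivity)
    have huv : ∀ i, u i * v i = a i := by
      intro i
      rw [hu, hv, ← mul_assoc, ← Real.sqrt_mul (inv_nonneg.mpr (hx i).le),
        inv_mul_cancel₀ (hx i).ne', Real.sqrt_one, one_mul]
    have hCS : (∑ i ∈ T, a i) ^ 2 ≤ (∑ i ∈ T, u i ^ 2) * (∑ i ∈ T, v i ^ 2) := by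
      have := Finset.sum_mul_sq_le_sq_mul_sq T u v
      simp only [huv] at this
      exact this
    have hu2 : ∑ i ∈ T, u i ^ 2 = ∑ j ∈ range (2 ^ L), (Real.sqrt ((j:ℝ) + 1))⁻¹ := by
      have h1 : ∀ i, u i ^ 2 = (Real.sqrt ((rnk a i : ℝ) + 1))⁻¹ := fun i =>
        Real.sq_sqrt (inv_nonneg.mpr (hx i).le)
      rw [← image_rnk_topset a hn,
        Finset.sum_image (fun x _ y _ hxy => rnk_injective a hxy)]
      exact Finset.sum_congr rfl fun i _ => h1 i
    have hv2 : ∑ i ∈ T, v i ^ 2 = ∑ i ∈ T, h i := by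
      apply Finset.sum_congr rfl
      intro i _
      rw [hv, hh, mul_pow, Real.sq_sqrt (hx i).le]
    have hsumu : ∑ i ∈ T, u i ^ 2 ≤ 2 * Real.sqrt ((2:ℝ) ^ L) := by
      rw [hu2]
      have := sum_inv_sqrt_le (2 ^ L)
      have hcast : ((2 ^ L : ℕ) : ℝ) = (2:ℝ) ^ L := by push_cast; ring
      rwa [hcast] at this
    have hUnn : 0 ≤ ∑ i ∈ T, h i := Finset.sum_nonneg fun i _ => hh0 i
    calc ((2:ℝ)⁻¹) ^ L * (∑ i ∈ T, a i) ^ 2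
        ≤ ((2:ℝ)⁻¹) ^ L * ((∑ i ∈ T, u i ^ 2) * (∑ i ∈ T, v i ^ 2)) := by
          apply mul_le_mul_of_nonneg_left hCS (by positivity)
      _ ≤ ((2:ℝ)⁻¹) ^ L * ((2 * Real.sqrt ((2:ℝ) ^ L)) * (∑ i ∈ T, h i)) := by
          apply mul_le_mul_of_nonneg_left ?_ (by positivity)
          rw [hv2]
          exact mul_le_mul_of_nonneg_right hsumu hUnn
      _ = 2 * q ^ L * ∑ i ∈ T, h i := by
          rw [sqrt_two_pow, hq, ← half_mul_sqrt_two, mul_pow]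
          ring
  -- step 2 : sum over scales and swap
  have step2 : ∑ L ∈ Finset.Icc 1 K, q ^ L * ∑ i ∈ topset a (2 ^ L), h i
      ≤ 4 * ∑ i, a i ^ 2 := by
    have hswap : ∑ L ∈ Finset.Icc 1 K, q ^ L * ∑ i ∈ topset a (2 ^ L), h i
        = ∑ i, (∑ L ∈ (Finset.Icc 1 K).filter (fun L => rnk a i < 2 ^ L), q ^ L) * h i := by
      have h1 : ∀ L, q ^ L * ∑ i ∈ topset a (2 ^ L), h i
          = ∑ i, (if rnk a i < 2 ^ L then q ^ L * h i else 0) := by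
        intro L
        rw [topset, Finset.sum_filter, Finset.mul_sum]
        exact Finset.sum_congr rfl fun i _ => by split <;> simp
      rw [Finset.sum_congr rfl fun L _ => h1 L, Finset.sum_comm]
      apply Finset.sum_congr rfl
      intro i _
      rw [Finset.sum_mul, ← Finset.sum_filter]
    rw [hswap]
    have hbound : ∀ i : Fin d,
        (∑ L ∈ (Finset.Icc 1 K).filter (fun L => rnk a i < 2 ^ L), q ^ L) * h i
          ≤ 4 * a i ^ 2 := by
      intro i
      have hx : (0:ℝ) < Real.sqrt ((rnk a i : ℝ) + 1) := Real.sqrt_pos.mpr (by positivity)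
      have htail := geom_tail_le K (rnk a i)
      calc (∑ L ∈ (Finset.Icc 1 K).filter (fun L => rnk a i < 2 ^ L), q ^ L) * h i
          ≤ (4 * (Real.sqrt ((rnk a i : ℝ) + 1))⁻¹) * h i :=
            mul_le_mul_of_nonneg_right htail (hh0 i)
        _ = 4 * a i ^ 2 * ((Real.sqrt ((rnk a i : ℝ) + 1))⁻¹ * Real.sqrt ((rnk a i : ℝ) + 1)) := by
            rw [hh]; ring
        _ = 4 * a i ^ 2 := by rw [inv_mul_cancel₀ hx.ne', mul_one]
    calc ∑ i, (∑ L ∈ (Finset.Icc 1 K).filter (fun L => rnk a i < 2 ^ L), q ^ L) * h i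
        ≤ ∑ i, 4 * a i ^ 2 := Finset.sum_le_sum fun i _ => hbound i
      _ = 4 * ∑ i, a i ^ 2 := by rw [Finset.mul_sum]
  calc ∑ L ∈ Finset.Icc 1 K, ((2:ℝ)⁻¹) ^ L * (∑ i ∈ topset a (2 ^ L), a i) ^ 2
      ≤ ∑ L ∈ Finset.Icc 1 K, 2 * q ^ L * ∑ i ∈ topset a (2 ^ L), h i :=
        Finset.sum_le_sum step1
    _ = 2 * ∑ L ∈ Finset.Icc 1 K, q ^ L * ∑ i ∈ topset a (2 ^ L), h i := by
        rw [Finset.mul_sum]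
        exact Finset.sum_congr rfl fun L _ => by ring
    _ ≤ 2 * (4 * ∑ i, a i ^ 2) := by
        apply mul_le_mul_of_nonneg_left step2 (by norm_num)
    _ ≤ 8 := by nlinarith [ha2]

end PermZeroSum

namespace PermZeroSum

open Finset

lemma card_filter_val_lt (d m : ℕ) (h : m ≤ d) :
    (Finset.univ.filter fun i : Fin d => (i : ℕ) < m).card = m := by
  have himg : (Finset.univ.filter fun i : Fin d => (i : ℕ) < m).image Fin.val
      = Finset.range m := by
    ext j
    simp only [Finset.mem_image, Finset.mem_filter, Finset.mem_univ, true_and,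
      Finset.mem_range]
    constructor
    · rintro ⟨i, hi, rfl⟩; exact hi
    · intro hj; exact ⟨⟨j, lt_of_lt_of_le hj h⟩, hj, rfl⟩
  rw [← Finset.card_image_of_injective _ Fin.val_injective, himg, Finset.card_range]

noncomputable def wv (d L : ℕ) : EuclideanSpace ℂ (Fin d) := WithLp.toLp 2 fun i =>
  if (i : ℕ) < 2 ^ (L - 1) then (((Real.sqrt 2)⁻¹ ^ L : ℝ) : ℂ)
  else if (i : ℕ) < 2 ^ L then -(((Real.sqrt 2)⁻¹ ^ L : ℝ) : ℂ) else 0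

lemma norm_wv_apply (d L : ℕ) (i : Fin d) :
    ‖wv d L i‖ = if (i : ℕ) < 2 ^ L then ((Real.sqrt 2)⁻¹) ^ L else 0 := by
  have hq0 : (0:ℝ) ≤ (Real.sqrt 2)⁻¹ ^ L := by positivity
  have hmono : 2 ^ (L - 1) ≤ 2 ^ L := Nat.pow_le_pow_right (by norm_num) (Nat.sub_le _ _)
  simp only [wv, PiLp.toLp_apply]
  by_cases h1 : (i : ℕ) < 2 ^ (L - 1)
  · rw [if_pos h1, if_pos (lt_of_lt_of_le h1 hmono), Complex.norm_real,
      Real.norm_eq_abs, abs_of_nonneg hq0]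
  · rw [if_neg h1]
    by_cases h2 : (i : ℕ) < 2 ^ L
    · rw [if_pos h2, if_pos h2, norm_neg, Complex.norm_real, Real.norm_eq_abs,
        abs_of_nonneg hq0]
    · rw [if_neg h2, if_neg h2, norm_zero]

lemma sum_sq_norm_wv (d L : ℕ) (hLd : 2 ^ L ≤ d) :
    ∑ i : Fin d, ‖wv d L i‖ ^ 2 = 1 := by
  have hsq : ((Real.sqrt 2)⁻¹ ^ L) ^ 2 = ((2:ℝ)⁻¹) ^ L := by
    rw [← pow_mul, mul_comm, pow_mul, inv_pow, Real.sq_sqrt (by norm_num : (0:ℝ) ≤ 2)]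
  calc ∑ i : Fin d, ‖wv d L i‖ ^ 2
      = ∑ i : Fin d, (if (i : ℕ) < 2 ^ L then ((2:ℝ)⁻¹) ^ L else 0) := by
        apply Finset.sum_congr rfl
        intro i _
        rw [norm_wv_apply]
        split
        · exact hsq
        · exact zero_pow (by norm_num)
    _ = ((2 ^ L : ℕ) : ℝ) * ((2:ℝ)⁻¹) ^ L := by
        rw [← Finset.sum_filter, Finset.sum_const, card_filter_val_lt d _ hLd,
          nsmul_eq_mul]
    _ = 1 := by
        push_cast
        rw [← mul_pow]
        norm_num

lemma norm_wv (d L : ℕ) (hLd : 2 ^ L ≤ d) : ‖wv d L‖ = 1 := by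
  rw [EuclideanSpace.norm_eq]
  have := sum_sq_norm_wv d L hLd
  rw [this, Real.sqrt_one]

lemma sum_wv (d L : ℕ) (hL1 : 1 ≤ L) (hLd : 2 ^ L ≤ d) :
    ∑ i : Fin d, wv d L i = 0 := by
  have hmono : 2 ^ (L - 1) ≤ 2 ^ L := Nat.pow_le_pow_right (by norm_num) (Nat.sub_le _ _)
  have hpoint : ∀ i : Fin d, wv d L i =
      (if (i : ℕ) < 2 ^ (L - 1) then (((Real.sqrt 2)⁻¹ ^ L : ℝ) : ℂ) else 0)
        + (if (i : ℕ) < 2 ^ (L - 1) then (((Real.sqrt 2)⁻¹ ^ L : ℝ) : ℂ) else 0)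
        + (if (i : ℕ) < 2 ^ L then -(((Real.sqrt 2)⁻¹ ^ L : ℝ) : ℂ) else 0) := by
    intro i
    simp only [wv, PiLp.toLp_apply]
    by_cases h1 : (i : ℕ) < 2 ^ (L - 1)
    · have h2 : (i : ℕ) < 2 ^ L := lt_of_lt_of_le h1 hmono
      simp only [if_pos h1, if_pos h2]
      ring
    · by_cases h2 : (i : ℕ) < 2 ^ L
      · simp only [if_neg h1, if_pos h2]
        ring
      · simp only [if_neg h1, if_neg h2]
        ring
  rw [Finset.sum_congr rfl fun i _ => hpoint i]
  rw [Finset.sum_add_distrib, Finset.sum_add_distrib]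
  have h1 : ∑ i : Fin d, (if (i : ℕ) < 2 ^ (L - 1) then (((Real.sqrt 2)⁻¹ ^ L : ℝ) : ℂ) else 0)
      = ((2 ^ (L - 1) : ℕ) : ℂ) * (((Real.sqrt 2)⁻¹ ^ L : ℝ) : ℂ) := by
    rw [← Finset.sum_filter, Finset.sum_const,
      card_filter_val_lt d _ (le_trans hmono hLd), nsmul_eq_mul]
  have h2 : ∑ i : Fin d, (if (i : ℕ) < 2 ^ L then -(((Real.sqrt 2)⁻¹ ^ L : ℝ) : ℂ) else 0)
      = ((2 ^ L : ℕ) : ℂ) * (-(((Real.sqrt 2)⁻¹ ^ L : ℝ) : ℂ)) := by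
    rw [← Finset.sum_filter, Finset.sum_const, card_filter_val_lt d _ hLd, nsmul_eq_mul]
  rw [h1, h2]
  have hpow : (2 : ℕ) ^ (L - 1) * 2 = 2 ^ L := by
    rw [← pow_succ, Nat.sub_add_cancel hL1]
  have hcast : ((2 ^ (L - 1) : ℕ) : ℂ) * 2 = ((2 ^ L : ℕ) : ℂ) := by
    rw [← hpow]; push_cast; ring
  have expand : ∀ x : ℂ, ((2 ^ (L-1) : ℕ) : ℂ) * x + ((2 ^ (L-1) : ℕ) : ℂ) * x
      + ((2 ^ L : ℕ) : ℂ) * (-x)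
      = (((2 ^ (L-1) : ℕ) : ℂ) * 2 - ((2 ^ L : ℕ) : ℂ)) * x := fun x => by ring
  rw [expand, hcast, sub_self, zero_mul]

end PermZeroSum

namespace PermZeroSum

open Finset

lemma sup_le {d : ℕ} (L : ℕ) (hLd : 2 ^ L ≤ d) (v u : EuclideanSpace ℂ (Fin d))
    (hu : ∀ i, ‖u i‖ = if (i : ℕ) < 2 ^ L then ((Real.sqrt 2)⁻¹) ^ L else 0) :
    (⨆ π : Equiv.Perm (Fin d),
        ‖∑ i : Fin d, v (π i) * (starRingEnd ℂ) (u i)‖ ^ 2)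
      ≤ ((2:ℝ)⁻¹) ^ L * (∑ i ∈ topset (fun i => ‖v i‖) (2 ^ L), ‖v i‖) ^ 2 := by
  set a : Fin d → ℝ := fun i => ‖v i‖ with ha
  have ha0 : ∀ i, 0 ≤ a i := fun i => norm_nonneg _
  set T : ℝ := ∑ i ∈ topset a (2 ^ L), a i with hTdef
  have hT0 : 0 ≤ T := Finset.sum_nonneg fun i _ => ha0 i
  have hqsq : (((Real.sqrt 2)⁻¹) ^ L) ^ 2 = ((2:ℝ)⁻¹) ^ L := by
    rw [← pow_mul, mul_comm, pow_mul, inv_pow, Real.sq_sqrt (by norm_num : (0:ℝ) ≤ 2)]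
  apply ciSup_le
  intro π
  set F := Finset.univ.filter fun i : Fin d => (i : ℕ) < 2 ^ L with hF
  have hcard : (F.image fun i => π i).card = 2 ^ L := by
    rw [Finset.card_image_of_injective _ (Equiv.injective π), hF,
      card_filter_val_lt d _ hLd]
  have hle : ‖∑ i : Fin d, v (π i) * (starRingEnd ℂ) (u i)‖ ≤ ((Real.sqrt 2)⁻¹) ^ L * T := by
    calc ‖∑ i : Fin d, v (π i) * (starRingEnd ℂ) (u i)‖
        ≤ ∑ i : Fin d, ‖v (π i) * (starRingEnd ℂ) (u i)‖ := norm_sum_le _ _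
      _ = ∑ i : Fin d, (if (i : ℕ) < 2 ^ L then ((Real.sqrt 2)⁻¹) ^ L * a (π i) else 0) := by
          apply Finset.sum_congr rfl
          intro i _
          rw [norm_mul, RCLike.norm_conj, hu i]
          split <;> ring
      _ = ∑ i ∈ F, ((Real.sqrt 2)⁻¹) ^ L * a (π i) := (Finset.sum_filter _ _).symm
      _ = ((Real.sqrt 2)⁻¹) ^ L * ∑ i ∈ F, a (π i) := by rw [Finset.mul_sum]
      _ = ((Real.sqrt 2)⁻¹) ^ L * ∑ j ∈ F.image fun i => π i, a j := by
          rw [Finset.sum_image (fun x _ y _ hxy => Equiv.injective π hxy)]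
      _ ≤ ((Real.sqrt 2)⁻¹) ^ L * T := by
          apply mul_le_mul_of_nonneg_left ?_ (by positivity)
          exact sum_le_sum_topset a ha0 hLd _ hcard
  calc ‖∑ i : Fin d, v (π i) * (starRingEnd ℂ) (u i)‖ ^ 2
      ≤ (((Real.sqrt 2)⁻¹) ^ L * T) ^ 2 := by
        apply pow_le_pow_left₀ (norm_nonneg _) hle
    _ = ((2:ℝ)⁻¹) ^ L * T ^ 2 := by rw [mul_pow, hqsq]

end PermZeroSum

open PermZeroSum

theorem exists_good_symmetric_measure_perm_zero_sum :
    ∃ C : ℝ, 0 < C ∧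
      ∀ (d : ℕ), 2 ≤ d →
        ∃ μ : Measure (EuclideanSpace ℂ (Fin d)),
          IsProbabilityMeasure μ ∧
          μ {w | ‖w‖ = 1 ∧ ∑ i : Fin d, w i = 0}ᶜ = 0 ∧
          Measure.map (fun w => -w) μ = μ ∧
          ∀ v : EuclideanSpace ℂ (Fin d), ‖v‖ = 1 → ∑ i : Fin d, v i = 0 →
            ∫ w, (⨆ π : Equiv.Perm (Fin d),
                ‖∑ i : Fin d, v (π i) * (starRingEnd ℂ) (w i)‖ ^ 2) ∂μ
              ≤ C / Real.log d := by
  classical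
  refine ⟨100, by norm_num, ?_⟩
  intro d hd
  have hd1 : d ≠ 0 := by omega
  set K := Nat.log 2 d with hKdef
  have hK1 : 1 ≤ K := Nat.log_pos (by norm_num) hd
  have hKd : 2 ^ K ≤ d := Nat.pow_log_le_self 2 hd1
  have hdK : d < 2 ^ (K + 1) := Nat.lt_pow_succ_log_self (by norm_num) d
  have hLd : ∀ L ∈ Finset.Icc 1 K, 2 ^ L ≤ d := fun L hL =>
    (Nat.pow_le_pow_right (by norm_num) (Finset.mem_Icc.mp hL).2).trans hKd
  set S : Set (EuclideanSpace ℂ (Fin d)) := {w | ‖w‖ = 1 ∧ ∑ i : Fin d, w i = 0} with hSdef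
  have hScl : IsClosed S := by
    have : S = {w : EuclideanSpace ℂ (Fin d) | ‖w‖ = 1}
        ∩ {w : EuclideanSpace ℂ (Fin d) | ∑ i : Fin d, w i = 0} := by
      ext w; simp [hSdef, Set.mem_setOf_eq, Set.mem_inter_iff]
    rw [this]
    apply IsClosed.inter
    · exact isClosed_eq continuous_norm continuous_const
    · exact isClosed_eq
        (continuous_finset_sum _ fun i _ => (EuclideanSpace.proj i (𝕜 := ℂ)).continuous)
        continuous_const
  have hSm : MeasurableSet S := hScl.measurableSet
  have hmemS : ∀ L ∈ Finset.Icc 1 K, wv d L ∈ S ∧ -wv d L ∈ S := by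
    intro L hL
    have h1 : 1 ≤ L := (Finset.mem_Icc.mp hL).1
    have h2 : 2 ^ L ≤ d := hLd L hL
    refine ⟨⟨norm_wv d L h2, sum_wv d L h1 h2⟩, ⟨?_, ?_⟩⟩
    · rw [norm_neg]; exact norm_wv d L h2
    · have : ∑ i : Fin d, (-wv d L) i = -∑ i : Fin d, wv d L i := by
        rw [← Finset.sum_neg_distrib]
        exact Finset.sum_congr rfl fun i _ => rfl
      rw [this, sum_wv d L h1 h2, neg_zero]
  set μ : Measure (EuclideanSpace ℂ (Fin d)) :=
    (((2 * K : ℕ) : ℝ≥0∞))⁻¹ •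
      ∑ L ∈ Finset.Icc 1 K,
        (Measure.dirac (wv d L) + Measure.dirac (-wv d L)) with hμ
  have hcK0 : ((2 * K : ℕ) : ℝ≥0∞) ≠ 0 := by
    simp only [ne_eq, Nat.cast_eq_zero]
    omega
  have hcKtop : ((2 * K : ℕ) : ℝ≥0∞) ≠ ⊤ := ENNReal.natCast_ne_top _
  have hprob : IsProbabilityMeasure μ := by
    constructor
    rw [hμ, Measure.smul_apply, Measure.finset_sum_apply]
    simp only [Measure.add_apply, measure_univ]
    rw [Finset.sum_const, Nat.card_Icc]
    simp only [smul_eq_mul, nsmul_eq_mul]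
    have h1 : ((K + 1 - 1 : ℕ) : ℝ≥0∞) * (1 + 1) = ((2 * K : ℕ) : ℝ≥0∞) := by
      rw [Nat.add_sub_cancel]
      push_cast
      ring
    rw [h1]
    exact ENNReal.inv_mul_cancel hcK0 hcKtop
  refine ⟨μ, hprob, ?_, ?_, ?_⟩
  · -- null outside S
    rw [hμ, Measure.smul_apply, Measure.finset_sum_apply]
    have hz : ∀ L ∈ Finset.Icc 1 K,
        (Measure.dirac (wv d L) + Measure.dirac (-wv d L)) Sᶜ = 0 := by
      intro L hL
      rw [Measure.add_apply, Measure.dirac_apply' _ hSm.compl,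
        Measure.dirac_apply' _ hSm.compl,
        Set.indicator_of_notMem (by simp [(hmemS L hL).1]),
        Set.indicator_of_notMem (by simp [(hmemS L hL).2])]
      simp
    rw [Finset.sum_congr rfl hz, Finset.sum_const_zero]
    simp
  · -- symmetry
    have hmeasneg : Measurable fun w : EuclideanSpace ℂ (Fin d) => -w :=
      continuous_neg.measurable
    rw [hμ, Measure.map_smul]
    congr 1
    have hmapsum : ∀ (s : Finset ℕ) (ν : ℕ → Measure (EuclideanSpace ℂ (Fin d))),
        Measure.map (fun w => -w) (∑ L ∈ s, ν L)
          = ∑ L ∈ s, Measure.map (fun w => -w) (ν L) := by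
      intro s ν
      induction s using Finset.induction_on with
      | empty => simp
      | insert _ _ hns ih =>
          rw [Finset.sum_insert hns, Measure.map_add _ _ hmeasneg, ih,
            Finset.sum_insert hns]
    rw [hmapsum]
    apply Finset.sum_congr rfl
    intro L _
    rw [Measure.map_add _ _ hmeasneg, Measure.map_dirac' hmeasneg,
      Measure.map_dirac' hmeasneg, neg_neg, add_comm]
  · -- the integral bound
    intro v hv hvsum
    set f : EuclideanSpace ℂ (Fin d) → ℝ := fun w => ⨆ π : Equiv.Perm (Fin d),
      ‖∑ i : Fin d, v (π i) * (starRingEnd ℂ) (w i)‖ ^ 2 with hfdef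
    set a : Fin d → ℝ := fun i => ‖v i‖ with hadef
    have ha0 : ∀ i, 0 ≤ a i := fun i => norm_nonneg _
    have ha2 : ∑ i, a i ^ 2 = 1 := by
      have h1 := EuclideanSpace.norm_eq v
      rw [hv] at h1
      exact Real.sqrt_eq_one.mp h1.symm
    have hint : ∀ x : EuclideanSpace ℂ (Fin d), Integrable f (Measure.dirac x) := by
      intro x
      apply (integrable_const (f x)).congr
      rw [Filter.EventuallyEq, MeasureTheory.ae_dirac_eq]
      exact Filter.eventually_pure.mpr rfl
    have hInt : ∫ w, f w ∂μ
        = ((2 * K : ℕ) : ℝ≥0∞)⁻¹.toReal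
            • ∑ L ∈ Finset.Icc 1 K, (f (wv d L) + f (-wv d L)) := by
      rw [hμ, integral_smul_measure,
        integral_finset_sum_measure (fun L _ => (hint _).add_measure (hint _))]
      congr 1
      apply Finset.sum_congr rfl
      intro L _
      rw [integral_add_measure (hint _) (hint _), integral_dirac, integral_dirac]
    have hbound : ∀ L ∈ Finset.Icc 1 K,
        f (wv d L) + f (-wv d L)
          ≤ 2 * (((2:ℝ)⁻¹) ^ L * (∑ i ∈ topset a (2 ^ L), a i) ^ 2) := by
      intro L hL
      have h2 : 2 ^ L ≤ d := hLd L hL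
      have hb1 : f (wv d L) ≤ ((2:ℝ)⁻¹) ^ L * (∑ i ∈ topset a (2 ^ L), a i) ^ 2 :=
        sup_le L h2 v (wv d L) (norm_wv_apply d L)
      have hb2 : f (-wv d L) ≤ ((2:ℝ)⁻¹) ^ L * (∑ i ∈ topset a (2 ^ L), a i) ^ 2 := by
        apply sup_le L h2 v (-wv d L)
        intro i
        have : (-wv d L) i = -(wv d L i) := rfl
        rw [this, norm_neg]
        exact norm_wv_apply d L i
      linarith
    have hsum16 : ∑ L ∈ Finset.Icc 1 K, (f (wv d L) + f (-wv d L)) ≤ 16 := by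
      calc ∑ L ∈ Finset.Icc 1 K, (f (wv d L) + f (-wv d L))
          ≤ ∑ L ∈ Finset.Icc 1 K,
              2 * (((2:ℝ)⁻¹) ^ L * (∑ i ∈ topset a (2 ^ L), a i) ^ 2) :=
            Finset.sum_le_sum hbound
        _ = 2 * ∑ L ∈ Finset.Icc 1 K,
              ((2:ℝ)⁻¹) ^ L * (∑ i ∈ topset a (2 ^ L), a i) ^ 2 := by
            rw [Finset.mul_sum]
        _ ≤ 2 * 8 := by
            apply mul_le_mul_of_nonneg_left
              (core K hKd a ha0 (le_of_eq ha2)) (by norm_num)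
        _ = 16 := by norm_num
    have htoReal : ((2 * K : ℕ) : ℝ≥0∞)⁻¹.toReal = ((2 * K : ℕ) : ℝ)⁻¹ := by
      rw [ENNReal.toReal_inv, ENNReal.toReal_natCast]
    have hKpos : (0:ℝ) < (K : ℝ) := by
      have : (1:ℝ) ≤ (K:ℝ) := by exact_mod_cast hK1
      linarith
    have hint_le : ∫ w, f w ∂μ ≤ 8 / (K : ℝ) := by
      rw [hInt, htoReal, smul_eq_mul]
      have h2K : ((2 * K : ℕ) : ℝ) = 2 * (K : ℝ) := by push_cast; ring
      calc ((2 * K : ℕ) : ℝ)⁻¹ * ∑ L ∈ Finset.Icc 1 K, (f (wv d L) + f (-wv d L))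
          ≤ ((2 * K : ℕ) : ℝ)⁻¹ * 16 := by
            apply mul_le_mul_of_nonneg_left hsum16 (by positivity)
        _ = 8 / (K : ℝ) := by
            rw [h2K]
            field_simp
            ring
    have hlogpos : 0 < Real.log d := Real.log_pos (by exact_mod_cast hd)
    have hlogle : Real.log d ≤ 2 * (K : ℝ) := by
      have h1 : (d : ℝ) ≤ ((2:ℝ)) ^ (K + 1) := by
        have := hdK.le
        exact_mod_cast this
      have h2 : Real.log d ≤ Real.log ((2:ℝ) ^ (K + 1)) :=
        Real.log_le_log (by exact_mod_cast Nat.pos_of_ne_zero hd1) h1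
      rw [Real.log_pow] at h2
      have h3 : Real.log 2 ≤ 1 := by
        have := Real.log_le_sub_one_of_pos (by norm_num : (0:ℝ) < 2)
        linarith
      have h4 : ((K + 1 : ℕ) : ℝ) * Real.log 2 ≤ ((K + 1 : ℕ) : ℝ) * 1 := by
        apply mul_le_mul_of_nonneg_left h3 (by positivity)
      have h5 : ((K + 1 : ℕ) : ℝ) ≤ 2 * (K : ℝ) := by
        have hK1' : (1:ℝ) ≤ (K:ℝ) := by exact_mod_cast hK1
        push_cast
        linarith
      calc Real.log d ≤ ((K + 1 : ℕ) : ℝ) * Real.log 2 := h2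
        _ ≤ ((K + 1 : ℕ) : ℝ) := by linarith [h4]
        _ ≤ 2 * (K : ℝ) := h5
    calc ∫ w, f w ∂μ ≤ 8 / (K : ℝ) := hint_le
      _ ≤ 100 / Real.log d := by
          rw [div_le_div_iff₀ hKpos hlogpos]
          nlinarith [hlogpos, hlogle, hKpos]
end

section
/- Let d ≥ 2, let G be a finite subgroup of U(ℂ^d), and let V ⊆ ℂ^d be a G-invariant subspace with 0 < dim V < d; let V^⊥ be its orthogonal complement (which is also G-invariant). Let t₁, t₂ > 0, and suppose μ₁ and μ₂ are symmetric Borel probability measures on the unit spheres S(V) and S(V^⊥) respectively such that ∫ sup_{g ∈ G} |⟨g u, w₁⟩|² dμ₁(w₁) ≤ t₁² ‖u‖² for all u ∈ V and ∫ sup_{g ∈ G} |⟨g u, w₂⟩|² dμ₂(w₂) ≤ t₂² ‖u‖² for all u ∈ V^⊥. Then there exists a symmetric Borel probability measure μ on S(ℂ^d) such that for every unit vector v ∈ ℂ^d, ∫ sup_{g ∈ G} |⟨g v, w⟩|² dμ(w) ≤ t₁² t₂² / (t₁² + t₂²). -/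
open scoped InnerProductSpace
open MeasureTheory

theorem reducible_inductive_step (d : ℕ) (hd : 2 ≤ d)
    (G : Subgroup (EuclideanSpace ℂ (Fin d) ≃ₗᵢ[ℂ] EuclideanSpace ℂ (Fin d)))
    (hG : Finite G)
    (V : Submodule ℂ (EuclideanSpace ℂ (Fin d)))
    (hV0 : 0 < Module.finrank ℂ V) (hVd : Module.finrank ℂ V < d)
    (hVinv : ∀ g ∈ G,
      (g : EuclideanSpace ℂ (Fin d) ≃ₗᵢ[ℂ] EuclideanSpace ℂ (Fin d)) '' (V : Set _) = V)
    (t₁ t₂ : ℝ) (ht₁ : 0 < t₁) (ht₂ : 0 < t₂)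
    (μ₁ μ₂ : Measure (EuclideanSpace ℂ (Fin d)))
    (hμ₁p : IsProbabilityMeasure μ₁) (hμ₂p : IsProbabilityMeasure μ₂)
    (hμ₁s : μ₁ {w | ‖w‖ = 1 ∧ w ∈ V}ᶜ = 0)
    (hμ₂s : μ₂ {w | ‖w‖ = 1 ∧ w ∈ Vᗮ}ᶜ = 0)
    (hμ₁sym : Measure.map (fun w => -w) μ₁ = μ₁)
    (hμ₂sym : Measure.map (fun w => -w) μ₂ = μ₂)
    (hμ₁ : ∀ u ∈ V,
      ∫ w, (⨆ g : G, ‖⟪(g : EuclideanSpace ℂ (Fin d) ≃ₗᵢ[ℂ]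
          EuclideanSpace ℂ (Fin d)) u, w⟫_ℂ‖ ^ 2) ∂μ₁ ≤ t₁ ^ 2 * ‖u‖ ^ 2)
    (hμ₂ : ∀ u ∈ Vᗮ,
      ∫ w, (⨆ g : G, ‖⟪(g : EuclideanSpace ℂ (Fin d) ≃ₗᵢ[ℂ]
          EuclideanSpace ℂ (Fin d)) u, w⟫_ℂ‖ ^ 2) ∂μ₂ ≤ t₂ ^ 2 * ‖u‖ ^ 2) :
    ∃ μ : Measure (EuclideanSpace ℂ (Fin d)),
      IsProbabilityMeasure μ ∧
      μ {w | ‖w‖ = 1}ᶜ = 0 ∧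
      Measure.map (fun w => -w) μ = μ ∧
      ∀ v : EuclideanSpace ℂ (Fin d), ‖v‖ = 1 →
        ∫ w, (⨆ g : G, ‖⟪(g : EuclideanSpace ℂ (Fin d) ≃ₗᵢ[ℂ]
            EuclideanSpace ℂ (Fin d)) v, w⟫_ℂ‖ ^ 2) ∂μ
          ≤ t₁ ^ 2 * t₂ ^ 2 / (t₁ ^ 2 + t₂ ^ 2) := by
  classical
  set E := EuclideanSpace ℂ (Fin d)
  haveI : Fintype G := Fintype.ofFinite G
  haveI : Nonempty G := ⟨1⟩
  -- abbreviation for the integrand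
  set F : E → E → ℝ := fun v w => ⨆ g : G, ‖⟪(g : E ≃ₗᵢ[ℂ] E) v, w⟫_ℂ‖ ^ 2 with hF
  -- continuity
  have hFcont : ∀ v, Continuous (F v) := by
    intro v
    have h1 : F v = fun w =>
        Finset.univ.sup' Finset.univ_nonempty (fun g : G => ‖⟪(g : E ≃ₗᵢ[ℂ] E) v, w⟫_ℂ‖ ^ 2) := by
      funext w
      rw [Finset.sup'_univ_eq_ciSup]
    rw [h1]
    exact Continuous.finset_sup'_apply _ fun g _ =>
      ((Continuous.inner continuous_const continuous_id).norm.pow 2)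
  -- pointwise bound
  have hFle : ∀ v w : E, F v w ≤ ‖v‖ ^ 2 * ‖w‖ ^ 2 := by
    intro v w
    refine ciSup_le fun g => ?_
    have h2 := norm_inner_le_norm (𝕜 := ℂ) ((g : E ≃ₗᵢ[ℂ] E) v) w
    rw [LinearIsometryEquiv.norm_map] at h2
    calc ‖⟪(g : E ≃ₗᵢ[ℂ] E) v, w⟫_ℂ‖ ^ 2 ≤ (‖v‖ * ‖w‖) ^ 2 := by
          exact pow_le_pow_left₀ (norm_nonneg _) h2 2
      _ = ‖v‖ ^ 2 * ‖w‖ ^ 2 := by ring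
  have hFnonneg : ∀ v w : E, 0 ≤ F v w := by
    intro v w
    refine le_ciSup_of_le (Set.Finite.bddAbove (Set.finite_range _)) ⟨1, G.one_mem⟩ ?_
    positivity
  -- invariance facts
  have hmemV : ∀ (g : G) (x : E), x ∈ V → (g : E ≃ₗᵢ[ℂ] E) x ∈ V := by
    intro g x hx
    have h := hVinv g g.2
    have : (g : E ≃ₗᵢ[ℂ] E) x ∈ (⇑(g : E ≃ₗᵢ[ℂ] E) '' (V : Set E)) := ⟨x, hx, rfl⟩
    rw [h] at this
    exact this
  have hmemVp : ∀ (g : G) (x : E), x ∈ Vᗮ → (g : E ≃ₗᵢ[ℂ] E) x ∈ Vᗮ := by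
    intro g x hx
    rw [Submodule.mem_orthogonal]
    intro u hu
    have hu' : u ∈ ⇑(g : E ≃ₗᵢ[ℂ] E) '' (V : Set E) := by
      rw [hVinv g g.2]; exact hu
    obtain ⟨z, hz, rfl⟩ := hu'
    rw [LinearIsometryEquiv.inner_map_map]
    exact (Submodule.mem_orthogonal V x).1 hx z hz
  -- the weights
  set a : ℝ := t₂ ^ 2 / (t₁ ^ 2 + t₂ ^ 2) with ha
  set b : ℝ := t₁ ^ 2 / (t₁ ^ 2 + t₂ ^ 2) with hb
  have hts : 0 < t₁ ^ 2 + t₂ ^ 2 := by positivity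
  have ha0 : 0 ≤ a := by positivity
  have hb0 : 0 ≤ b := by positivity
  have hab : a + b = 1 := by
    rw [ha, hb, ← add_div, add_comm, div_self hts.ne']
  set μ : Measure E := ENNReal.ofReal a • μ₁ + ENNReal.ofReal b • μ₂ with hμ
  have hμuniv : μ Set.univ = 1 := by
    simp only [hμ, Measure.add_apply, Measure.smul_apply, smul_eq_mul, measure_univ, mul_one]
    rw [← ENNReal.ofReal_add ha0 hb0, hab, ENNReal.ofReal_one]
  refine ⟨μ, ⟨hμuniv⟩, ?_, ?_, ?_⟩
  · -- support on sphere
    have h1 : μ₁ {w : E | ‖w‖ = 1}ᶜ = 0 := by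
      refine measure_mono_null ?_ hμ₁s
      intro w hw h
      exact hw h.1
    have h2 : μ₂ {w : E | ‖w‖ = 1}ᶜ = 0 := by
      refine measure_mono_null ?_ hμ₂s
      intro w hw h
      exact hw h.1
    simp [hμ, Measure.add_apply, Measure.smul_apply, h1, h2]
    exact ⟨Or.inr h1, Or.inr h2⟩
  · -- symmetry
    rw [hμ, Measure.map_add _ _ (measurable_neg), Measure.map_smul, Measure.map_smul]
    simp only [hμ₁sym, hμ₂sym]
  · -- main estimate
    intro v hv
    set u₁ : E := (V.orthogonalProjectionOnto v : E) with hu₁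
    set u₂ : E := (Vᗮ.orthogonalProjectionOnto v : E) with hu₂
    have hu₁V : u₁ ∈ V := (V.orthogonalProjectionOnto v).2
    have hu₂V : u₂ ∈ Vᗮ := (Vᗮ.orthogonalProjectionOnto v).2
    have hdecomp : u₁ + u₂ = v := V.starProjection_add_starProjection_orthogonal v
    have hsum : ‖u₁‖ ^ 2 + ‖u₂‖ ^ 2 = 1 := by
      have h := Submodule.norm_sq_eq_add_norm_sq_projection v V
      rw [hv, one_pow] at h
      rw [hu₁, hu₂, Submodule.norm_coe, Submodule.norm_coe]
      exact h.symm
    -- a.e. statements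
    have hae1 : ∀ᵐ w ∂μ₁, ‖w‖ = 1 ∧ w ∈ V := by
      rw [ae_iff]
      exact hμ₁s
    have hae2 : ∀ᵐ w ∂μ₂, ‖w‖ = 1 ∧ w ∈ Vᗮ := by
      rw [ae_iff]
      exact hμ₂s
    -- F v = F u₁ on V, F v = F u₂ on Vᗮ
    have hcong1 : ∀ w : E, w ∈ V → F v w = F u₁ w := by
      intro w hw
      refine iSup_congr fun g => ?_
      congr 2
      have : (g : E ≃ₗᵢ[ℂ] E) v = (g : E ≃ₗᵢ[ℂ] E) u₁ + (g : E ≃ₗᵢ[ℂ] E) u₂ := by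
        rw [← map_add, hdecomp]
      rw [this, inner_add_left]
      have h0 : ⟪(g : E ≃ₗᵢ[ℂ] E) u₂, w⟫_ℂ = 0 := by
        exact (Submodule.mem_orthogonal' V _).1 (hmemVp g u₂ hu₂V) w hw
      rw [h0, add_zero]
    have hcong2 : ∀ w : E, w ∈ Vᗮ → F v w = F u₂ w := by
      intro w hw
      refine iSup_congr fun g => ?_
      congr 2
      have : (g : E ≃ₗᵢ[ℂ] E) v = (g : E ≃ₗᵢ[ℂ] E) u₁ + (g : E ≃ₗᵢ[ℂ] E) u₂ := by
        rw [← map_add, hdecomp]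
      rw [this, inner_add_left]
      have h0 : ⟪(g : E ≃ₗᵢ[ℂ] E) u₁, w⟫_ℂ = 0 := by
        exact (Submodule.mem_orthogonal V _).1 hw _ (hmemV g u₁ hu₁V)
      rw [h0, zero_add]
    -- integrability
    have hint : ∀ (x : E) (ν : Measure E), IsProbabilityMeasure ν →
        (∀ᵐ w ∂ν, ‖w‖ = 1) → Integrable (F x) ν := by
      intro x ν hν hae
      refine Integrable.mono' (integrable_const (‖x‖ ^ 2)) (hFcont x).aestronglyMeasurable ?_
      filter_upwards [hae] with w hw
      rw [Real.norm_of_nonneg (hFnonneg x w)]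
      calc F x w ≤ ‖x‖ ^ 2 * ‖w‖ ^ 2 := hFle x w
        _ = ‖x‖ ^ 2 := by rw [hw]; ring
    have hint1 : Integrable (F v) μ₁ := hint v μ₁ hμ₁p (hae1.mono fun w h => h.1)
    have hint2 : Integrable (F v) μ₂ := hint v μ₂ hμ₂p (hae2.mono fun w h => h.1)
    -- split the integral
    have hsplit : ∫ w, F v w ∂μ = a * ∫ w, F v w ∂μ₁ + b * ∫ w, F v w ∂μ₂ := by
      rw [hμ, integral_add_measure (hint1.smul_measure ENNReal.ofReal_ne_top)
        (hint2.smul_measure ENNReal.ofReal_ne_top),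
        integral_smul_measure, integral_smul_measure,
        ENNReal.toReal_ofReal ha0, ENNReal.toReal_ofReal hb0]
      simp [smul_eq_mul]
      rfl
    have hI1 : ∫ w, F v w ∂μ₁ ≤ t₁ ^ 2 * ‖u₁‖ ^ 2 := by
      have heq : ∫ w, F v w ∂μ₁ = ∫ w, F u₁ w ∂μ₁ := by
        refine integral_congr_ae ?_
        filter_upwards [hae1] with w hw
        exact hcong1 w hw.2
      rw [heq]
      exact hμ₁ u₁ hu₁V
    have hI2 : ∫ w, F v w ∂μ₂ ≤ t₂ ^ 2 * ‖u₂‖ ^ 2 := by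
      have heq : ∫ w, F v w ∂μ₂ = ∫ w, F u₂ w ∂μ₂ := by
        refine integral_congr_ae ?_
        filter_upwards [hae2] with w hw
        exact hcong2 w hw.2
      rw [heq]
      exact hμ₂ u₂ hu₂V
    calc ∫ w, F v w ∂μ = a * ∫ w, F v w ∂μ₁ + b * ∫ w, F v w ∂μ₂ := hsplit
      _ ≤ a * (t₁ ^ 2 * ‖u₁‖ ^ 2) + b * (t₂ ^ 2 * ‖u₂‖ ^ 2) := by
          gcongr
      _ = (t₁ ^ 2 * t₂ ^ 2 / (t₁ ^ 2 + t₂ ^ 2)) * (‖u₁‖ ^ 2 + ‖u₂‖ ^ 2) := by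
          rw [ha, hb]; field_simp
      _ = t₁ ^ 2 * t₂ ^ 2 / (t₁ ^ 2 + t₂ ^ 2) := by rw [hsum, mul_one]
end

section
/- Let 0 < c ≤ 1/log 2 and define η(x) = (1 + c·log x)^{-1/2} for real x ≥ 1. Then for all real x, y ≥ 1 the following two inequalities hold: (i) η(x)·η(y) / (η(x)² + η(y)²)^{1/2} ≤ η(x + y); (ii) η(x)·η(y) ≤ η(x·y). -/
theorem eta_inequalities (c : ℝ) (hc0 : 0 < c) (hc : c ≤ 1 / Real.log 2)
    (η : ℝ → ℝ) (hη : ∀ x : ℝ, 1 ≤ x → η x = (1 + c * Real.log x) ^ (-(1 : ℝ)/2)) :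
    ∀ x y : ℝ, 1 ≤ x → 1 ≤ y →
      η x * η y / Real.sqrt (η x ^ 2 + η y ^ 2) ≤ η (x + y) ∧
      η x * η y ≤ η (x * y) := by
  have key : ∀ t : ℝ, 0 < t → t ^ (-(1:ℝ)/2) = 1 / Real.sqrt t := by
    intro t ht
    rw [Real.sqrt_eq_rpow, one_div, ← Real.rpow_neg ht.le]
    norm_num
  intro x y hx hy
  have hx0 : (0:ℝ) < x := lt_of_lt_of_le one_pos hx
  have hy0 : (0:ℝ) < y := lt_of_lt_of_le one_pos hy
  have hlx : 0 ≤ Real.log x := Real.log_nonneg hx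
  have hly : 0 ≤ Real.log y := Real.log_nonneg hy
  obtain ⟨A, hAdef⟩ : ∃ A : ℝ, A = 1 + c * Real.log x := ⟨_, rfl⟩
  obtain ⟨B, hBdef⟩ : ∃ B : ℝ, B = 1 + c * Real.log y := ⟨_, rfl⟩
  have hA : (1:ℝ) ≤ A := by rw [hAdef]; nlinarith
  have hB : (1:ℝ) ≤ B := by rw [hBdef]; nlinarith
  have hA0 : (0:ℝ) < A := lt_of_lt_of_le one_pos hA
  have hB0 : (0:ℝ) < B := lt_of_lt_of_le one_pos hB
  have hxy1 : (1:ℝ) ≤ x * y := by nlinarith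
  have hxpy1 : (1:ℝ) ≤ x + y := by linarith
  have ex : η x = 1 / Real.sqrt A := by rw [hη x hx, ← hAdef, key A hA0]
  have ey : η y = 1 / Real.sqrt B := by rw [hη y hy, ← hBdef, key B hB0]
  -- constants for x+y and x*y
  obtain ⟨C, hCdef⟩ : ∃ C : ℝ, C = 1 + c * Real.log (x + y) := ⟨_, rfl⟩
  obtain ⟨D, hDdef⟩ : ∃ D : ℝ, D = 1 + c * Real.log (x * y) := ⟨_, rfl⟩
  have hlC : 0 ≤ Real.log (x + y) := Real.log_nonneg hxpy1
  have hlD : 0 ≤ Real.log (x * y) := Real.log_nonneg hxy1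
  have hC0 : (0:ℝ) < C := by rw [hCdef]; nlinarith
  have hD0 : (0:ℝ) < D := by rw [hDdef]; nlinarith
  have exy : η (x + y) = 1 / Real.sqrt C := by rw [hη _ hxpy1, ← hCdef, key C hC0]
  have exym : η (x * y) = 1 / Real.sqrt D := by rw [hη _ hxy1, ← hDdef, key D hD0]
  have hlog2 : 0 < Real.log 2 := Real.log_pos (by norm_num)
  have hclog2 : c * Real.log 2 ≤ 1 := (le_div_iff₀ hlog2).mp hc
  -- key inequality C ≤ A + B
  have hsum : x + y ≤ 2 * (x * y) := by nlinarith
  have hlogsum : Real.log (x + y) ≤ Real.log 2 + Real.log x + Real.log y := by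
    have h1 : Real.log (x + y) ≤ Real.log (2 * (x * y)) :=
      Real.log_le_log (by linarith) hsum
    rw [Real.log_mul (by norm_num) (by positivity), Real.log_mul hx0.ne' hy0.ne'] at h1
    linarith
  have hCAB : C ≤ A + B := by
    have := mul_le_mul_of_nonneg_left hlogsum hc0.le
    rw [hAdef, hBdef, hCdef]
    nlinarith [this, hclog2]
  -- key inequality D ≤ A * B
  have hDAB : D ≤ A * B := by
    rw [hDdef, Real.log_mul hx0.ne' hy0.ne', hAdef, hBdef]
    nlinarith [mul_nonneg (mul_nonneg hc0.le hlx) (mul_nonneg hc0.le hly)]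
  have sA : 0 < Real.sqrt A := Real.sqrt_pos.mpr hA0
  have sB : 0 < Real.sqrt B := Real.sqrt_pos.mpr hB0
  have sC : 0 < Real.sqrt C := Real.sqrt_pos.mpr hC0
  have sD : 0 < Real.sqrt D := Real.sqrt_pos.mpr hD0
  have sAB : 0 < Real.sqrt (A + B) := Real.sqrt_pos.mpr (by linarith)
  constructor
  · rw [ex, ey, exy]
    have h2 : (1 / Real.sqrt A) ^ 2 + (1 / Real.sqrt B) ^ 2 = (A + B) / (A * B) := by
      rw [div_pow, div_pow, one_pow, Real.sq_sqrt hA0.le, Real.sq_sqrt hB0.le]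
      field_simp
      ring
    rw [h2, Real.sqrt_div (by linarith : (0:ℝ) ≤ A + B), Real.sqrt_mul hA0.le]
    have lhs_eq : 1 / Real.sqrt A * (1 / Real.sqrt B) /
        (Real.sqrt (A + B) / (Real.sqrt A * Real.sqrt B)) = 1 / Real.sqrt (A + B) := by
      field_simp
    rw [lhs_eq]
    exact one_div_le_one_div_of_le sC (Real.sqrt_le_sqrt hCAB)
  · rw [ex, ey, exym]
    have : 1 / Real.sqrt A * (1 / Real.sqrt B) = 1 / Real.sqrt (A * B) := by
      rw [Real.sqrt_mul hA0.le]
      field_simp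
    rw [this]
    exact one_div_le_one_div_of_le sD (Real.sqrt_le_sqrt hDAB)
end

section
/- Let G be a finite subgroup of U(ℂ^d) which is irreducible (the only G-invariant subspaces of ℂ^d are 0 and ℂ^d), and suppose ℂ^d = V₁ ⊕ ⋯ ⊕ V_r is an internal direct sum decomposition into nonzero subspaces which is a system of imprimitivity for G, i.e. for every g ∈ G and every i there is j with g·V_i = V_j. Then the subspaces V_i are pairwise orthogonal: ⟨x, y⟩ = 0 whenever x ∈ V_i, y ∈ V_j and i ≠ j. -/
open scoped InnerProductSpace

noncomputable section ImprimAux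

variable {d r : ℕ} (V : Fin r → Submodule ℂ (EuclideanSpace ℂ (Fin d)))

/-- Projection onto `V i` along the direct sum decomposition. -/
noncomputable def imprimProj (hV : DirectSum.IsInternal V) (i : Fin r) :
    EuclideanSpace ℂ (Fin d) →ₗ[ℂ] EuclideanSpace ℂ (Fin d) :=
  (V i).subtype ∘ₗ (DirectSum.component ℂ (Fin r) (fun i => V i) i) ∘ₗ
    (LinearEquiv.ofBijective (DirectSum.coeLinearMap V) hV).symm.toLinearMap

lemma imprimProj_apply_of_mem (hV : DirectSum.IsInternal V) (i k : Fin r)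
    {x : EuclideanSpace ℂ (Fin d)} (hx : x ∈ V k) :
    imprimProj V hV i x = if i = k then x else 0 := by
  have hsymm : (LinearEquiv.ofBijective (DirectSum.coeLinearMap V) hV).symm x
      = DirectSum.lof ℂ (Fin r) (fun i => V i) k ⟨x, hx⟩ := by
    rw [LinearEquiv.symm_apply_eq]
    exact (DirectSum.coeLinearMap_of (A := V) k ⟨x, hx⟩).symm
  unfold imprimProj
  simp only [LinearMap.comp_apply, LinearEquiv.coe_coe, hsymm, DirectSum.component.of]
  by_cases h : i = k
  · subst h; simp
  · rw [dif_neg (fun hk => h hk.symm), if_neg h]; simp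

lemma imprimProj_eq_of_forall (hV : DirectSum.IsInternal V)
    (f g : EuclideanSpace ℂ (Fin d) →ₗ[ℂ] EuclideanSpace ℂ (Fin d))
    (h : ∀ k, ∀ x ∈ V k, f x = g x) : f = g := by
  have htop : LinearMap.eqLocus f g = ⊤ := by
    rw [eq_top_iff, ← hV.submodule_iSup_eq_top]
    exact iSup_le fun k x hx => h k x hx
  exact LinearMap.eqLocus_eq_top.mp htop

lemma adjoint_isometryEquiv (w : EuclideanSpace ℂ (Fin d) ≃ₗᵢ[ℂ] EuclideanSpace ℂ (Fin d)) :
    LinearMap.adjoint (w.toLinearEquiv : EuclideanSpace ℂ (Fin d) →ₗ[ℂ] EuclideanSpace ℂ (Fin d))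
      = (w.symm.toLinearEquiv : EuclideanSpace ℂ (Fin d) →ₗ[ℂ] EuclideanSpace ℂ (Fin d)) := by
  refine LinearMap.ext fun b => ?_
  refine ext_inner_left ℂ fun a => ?_
  rw [LinearMap.adjoint_inner_right]
  simp only [LinearEquiv.coe_coe, LinearIsometryEquiv.coe_toLinearEquiv]
  conv_lhs => rw [← w.apply_symm_apply b]
  rw [w.inner_map_map]

end ImprimAux

theorem imprimitivity_system_orthogonal (d : ℕ)
    (G : Subgroup (EuclideanSpace ℂ (Fin d) ≃ₗᵢ[ℂ] EuclideanSpace ℂ (Fin d)))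
    (hG : Finite G)
    (hirr : ∀ W : Submodule ℂ (EuclideanSpace ℂ (Fin d)),
      (∀ g ∈ G,
        (g : EuclideanSpace ℂ (Fin d) ≃ₗᵢ[ℂ] EuclideanSpace ℂ (Fin d)) '' (W : Set _) = W) →
      W = ⊥ ∨ W = ⊤)
    (r : ℕ) (V : Fin r → Submodule ℂ (EuclideanSpace ℂ (Fin d)))
    (hV : DirectSum.IsInternal V)
    (hVne : ∀ i, V i ≠ ⊥)
    (hperm : ∀ g ∈ G, ∀ i, ∃ j,
      (g : EuclideanSpace ℂ (Fin d) ≃ₗᵢ[ℂ] EuclideanSpace ℂ (Fin d)) '' (V i) = V j) :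
    ∀ i j, i ≠ j → ∀ x ∈ V i, ∀ y ∈ V j, ⟪x, y⟫_ℂ = 0 := by
  intro i j hij x hx y hy
  rcases subsingleton_or_nontrivial (EuclideanSpace ℂ (Fin d)) with hs | hs
  · have hx0 : x = 0 := Subsingleton.elim _ _
    simp [hx0]
  set P : Fin r → (EuclideanSpace ℂ (Fin d) →ₗ[ℂ] EuclideanSpace ℂ (Fin d)) :=
    imprimProj V hV with hP
  set u : G → (EuclideanSpace ℂ (Fin d) ≃ₗᵢ[ℂ] EuclideanSpace ℂ (Fin d)) :=
    fun g => (g : EuclideanSpace ℂ (Fin d) ≃ₗᵢ[ℂ] EuclideanSpace ℂ (Fin d)) with hu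
  -- permutations induced by each group element
  have hσex : ∀ g : G, ∃ σ : Equiv.Perm (Fin r), ∀ k, (u g) '' (V k) = V (σ k) := by
    intro g
    choose f hf using hperm (g : _) g.2
    have hfinj : Function.Injective f := by
      intro a b hab
      by_contra hne
      have h1 := hf a
      have h2 := hf b
      rw [hab] at h1
      have himg := h1.trans h2.symm
      have hVa : V a = V b := SetLike.coe_injective
        (Set.image_injective.mpr (LinearIsometryEquiv.injective _) himg)
      have hdisj : Disjoint (V a) (V b) := (hV.submodule_iSupIndep.pairwiseDisjoint) hne
      rw [hVa] at hdisj
      exact hVne b (disjoint_self.mp hdisj)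
    exact ⟨Equiv.ofBijective f (Finite.injective_iff_bijective.mp hfinj), fun k => hf k⟩
  choose σ hσ using hσex
  -- conjugation: g P_k g⁻¹ = P_{σ g k}
  have hconj : ∀ g : G, ∀ k,
      P (σ g k) = (u g).toLinearMap ∘ₗ P k ∘ₗ (u g).symm.toLinearMap := by
    intro g k
    apply imprimProj_eq_of_forall V hV
    intro m z hz
    set m' := (σ g).symm m with hm'
    have hmm : σ g m' = m := (σ g).apply_symm_apply m
    have hz' : (u g).symm z ∈ V m' := by
      have : z ∈ (u g) '' (V m') := by rw [hσ g m', hmm]; exact hz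
      rcases this with ⟨w, hw, hwz⟩
      rwa [← hwz, (u g).symm_apply_apply]
    rw [hP]
    rw [imprimProj_apply_of_mem V hV (σ g k) m hz]
    simp only [LinearMap.comp_apply, LinearEquiv.coe_coe,
      LinearIsometryEquiv.coe_toLinearEquiv]
    rw [imprimProj_apply_of_mem V hV k m' hz']
    have hiff : (σ g k = m) ↔ (k = m') := by
      rw [← hmm]; exact (σ g).apply_eq_iff_eq
    by_cases hc : k = m'
    · rw [if_pos (hiff.mpr hc), if_pos hc, (u g).apply_symm_apply]
    · rw [if_neg (fun h => hc (hiff.mp h)), if_neg hc, map_zero]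
  -- the averaged operator
  obtain ⟨T, hT⟩ : ∃ T, T = ∑ k, LinearMap.adjoint (P k) ∘ₗ P k := ⟨_, rfl⟩
  -- conjugation invariance of T
  have key : ∀ g : G, ∀ k,
      LinearMap.adjoint (P (σ g k)) ∘ₗ P (σ g k)
        = (u g).toLinearMap ∘ₗ (LinearMap.adjoint (P k) ∘ₗ P k) ∘ₗ (u g).symm.toLinearMap := by
    intro g k
    rw [hconj g k, LinearMap.adjoint_comp, LinearMap.adjoint_comp,
      adjoint_isometryEquiv, adjoint_isometryEquiv]
    ext v
    simp [LinearMap.comp_apply, LinearIsometryEquiv.coe_toLinearEquiv]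
  have hTconj : ∀ g : G,
      (u g).toLinearMap ∘ₗ T ∘ₗ (u g).symm.toLinearMap = T := by
    intro g
    calc (u g).toLinearMap ∘ₗ T ∘ₗ (u g).symm.toLinearMap
        = ∑ k, (u g).toLinearMap ∘ₗ (LinearMap.adjoint (P k) ∘ₗ P k) ∘ₗ
            (u g).symm.toLinearMap := by
          ext v
          simp [hT, LinearMap.sum_apply, LinearMap.comp_apply, map_sum]
      _ = ∑ k, LinearMap.adjoint (P (σ g k)) ∘ₗ P (σ g k) := by
          exact Finset.sum_congr rfl fun k _ => (key g k).symm
      _ = T := by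
          rw [hT]
          exact Equiv.sum_comp (σ g) (fun k => LinearMap.adjoint (P k) ∘ₗ P k)
  have hcommp : ∀ g : G, ∀ v, T ((u g) v) = (u g) (T v) := by
    intro g v
    have := congrArg (fun F : EuclideanSpace ℂ (Fin d) →ₗ[ℂ] EuclideanSpace ℂ (Fin d) =>
      F ((u g) v)) (hTconj g)
    simp only [LinearMap.comp_apply, LinearEquiv.coe_coe,
      LinearIsometryEquiv.coe_toLinearEquiv, (u g).symm_apply_apply] at this
    exact this.symm
  -- T has an eigenvalue, its eigenspace is G-invariant, hence ⊤
  obtain ⟨μ, hμ⟩ := Module.End.exists_eigenvalue (T : Module.End ℂ (EuclideanSpace ℂ (Fin d)))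
  set W := Module.End.eigenspace T μ with hW
  have hWinv : ∀ g ∈ G,
      (g : EuclideanSpace ℂ (Fin d) ≃ₗᵢ[ℂ] EuclideanSpace ℂ (Fin d)) '' (W : Set _) = W := by
    intro g hg
    set g' : G := ⟨g, hg⟩ with hg'
    ext v
    simp only [Set.mem_image, SetLike.mem_coe]
    constructor
    · rintro ⟨w, hw, rfl⟩
      rw [Module.End.mem_eigenspace_iff] at hw ⊢
      show T ((u g') w) = μ • (u g') w
      rw [hcommp g' w, hw, map_smul]
    · intro hv
      refine ⟨(u g').symm v, ?_, (u g').apply_symm_apply v⟩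
      rw [Module.End.mem_eigenspace_iff] at hv ⊢
      apply (u g').injective
      rw [map_smul, ← hcommp g', (u g').apply_symm_apply, hv]
  have hWtop : W = ⊤ := by
    rcases hirr W hWinv with h | h
    · exact absurd h (Module.End.hasEigenvalue_iff.mp hμ)
    · exact h
  have hTid : ∀ v, T v = μ • v := by
    intro v
    have hvW : v ∈ W := by rw [hWtop]; trivial
    exact Module.End.mem_eigenspace_iff.mp hvW
  -- inner product expansion of T
  have hinner : ∀ a b : EuclideanSpace ℂ (Fin d),
      ⟪a, T b⟫_ℂ = ∑ k, ⟪P k a, P k b⟫_ℂ := by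
    intro a b
    rw [hT]
    simp only [LinearMap.sum_apply, inner_sum, LinearMap.comp_apply,
      LinearMap.adjoint_inner_right]
  -- μ = 1
  obtain ⟨z, hz, hz0⟩ := (Submodule.ne_bot_iff _).mp (hVne i)
  have hPz : ∀ k, P k z = if k = i then z else 0 := fun k =>
    imprimProj_apply_of_mem V hV k i hz
  have hμ1 : μ = 1 := by
    have h1 : ⟪z, T z⟫_ℂ = ⟪z, z⟫_ℂ := by
      rw [hinner]
      have : ∀ k, ⟪P k z, P k z⟫_ℂ = if k = i then ⟪z, z⟫_ℂ else 0 := by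
        intro k
        rw [hPz k]
        by_cases h : k = i <;> simp [h]
      rw [Finset.sum_congr rfl fun k _ => this k]
      simp
    have h2 : ⟪z, T z⟫_ℂ = μ * ⟪z, z⟫_ℂ := by rw [hTid z, inner_smul_right]
    have hzz : ⟪z, z⟫_ℂ ≠ 0 := inner_self_ne_zero.mpr hz0
    have h3 : μ * ⟪z, z⟫_ℂ = 1 * ⟪z, z⟫_ℂ := by rw [one_mul, ← h2, h1]
    exact mul_right_cancel₀ hzz h3
  -- conclusion
  have hPx : ∀ k, P k x = if k = i then x else 0 := fun k =>
    imprimProj_apply_of_mem V hV k i hx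
  have hPy : ∀ k, P k y = if k = j then y else 0 := fun k =>
    imprimProj_apply_of_mem V hV k j hy
  have hzero : ⟪x, T y⟫_ℂ = 0 := by
    rw [hinner]
    apply Finset.sum_eq_zero
    intro k _
    rw [hPx k, hPy k]
    by_cases h1 : k = i
    · rw [if_pos h1, if_neg (h1 ▸ hij)]
      simp
    · rw [if_neg h1]
      simp
  rw [hTid y, inner_smul_right, hμ1, one_mul] at hzero
  exact hzero
end

section
/- There is an absolute constant C > 0 with the following property. Let d ≥ 2 and let G be a finite subgroup of U(ℂ^d) such that the index [G : G ∩ Z_d] is at most e^{d/log d}, where Z_d = {λ·I_d : λ ∈ ℂ, |λ| = 1} is the group of unitary scalar matrices. Then there exists a symmetric Borel probability measure μ on the unit sphere S(ℂ^d) (one may take the normalised uniform measure) such that for every unit vector v ∈ ℂ^d, ∫ sup_{g ∈ G} |⟨g v, w⟩|² dμ(w) ≤ C / log d. -/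
open scoped InnerProductSpace
open MeasureTheory

/-- The subgroup `Z_d` of unitary scalar matrices: unimodular scalar multiples of the identity. -/
noncomputable def scalarSubgroup (d : ℕ) :
    Subgroup (EuclideanSpace ℂ (Fin d) ≃ₗᵢ[ℂ] EuclideanSpace ℂ (Fin d)) where
  carrier := {g | ∃ c : ℂ, ‖c‖ = 1 ∧ ∀ v, g v = c • v}
  one_mem' := ⟨1, by simp, fun v => by simp⟩
  mul_mem' := by
    rintro a b ⟨ca, hca, ha⟩ ⟨cb, hcb, hb⟩
    refine ⟨ca * cb, by simp [hca, hcb], fun v => ?_⟩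
    have h1 : (a * b) v = a (b v) := rfl
    rw [h1, hb, LinearIsometryEquiv.map_smul, ha, smul_smul, mul_comm cb ca]
  inv_mem' := by
    rintro a ⟨c, hc, ha⟩
    have hc0 : c ≠ 0 := by
      intro h; rw [h] at hc; simp at hc
    refine ⟨c⁻¹, by simp [hc], fun v => ?_⟩
    have hav : a (c⁻¹ • v) = v := by
      rw [ha, smul_smul, mul_inv_cancel₀ hc0, one_smul]
    have h2 : a⁻¹ v = a.symm v := rfl
    rw [h2]
    apply a.injective
    rw [a.apply_symm_apply, hav]

namespace RMW

open Finset Real Nat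

noncomputable def sgn (b : Bool) : ℝ := if b then 1 else -1

lemma sgn_abs (b : Bool) : |sgn b| = 1 := by cases b <;> simp [sgn]

lemma sgn_sq (b : Bool) : sgn b ^ 2 = 1 := by cases b <;> norm_num [sgn]

lemma cube_sum_prod {d : ℕ} (f : Fin d → Bool → ℝ) :
    ∑ s : Fin d → Bool, ∏ j, f j (s j) = ∏ j, ∑ b, f j b := by
  rw [Finset.prod_univ_sum, ← Fintype.piFinset_univ]

/-- MGF bound for the Rademacher sum over the discrete cube. -/
lemma mgf_bound {d : ℕ} (p : Fin d → ℝ) (hp : ∑ j, p j ^ 2 ≤ 1) (t : ℝ) :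
    ∑ s : Fin d → Bool, Real.exp (t * ∑ j, sgn (s j) * p j)
      ≤ 2 ^ d * Real.exp (t ^ 2 / 2) := by
  have h1 : ∑ s : Fin d → Bool, Real.exp (t * ∑ j, sgn (s j) * p j)
      = ∏ j, ∑ b : Bool, Real.exp (t * (sgn b * p j)) := by
    rw [← cube_sum_prod]
    refine Finset.sum_congr rfl fun s _ => ?_
    rw [← Real.exp_sum, Finset.mul_sum]
  rw [h1]
  have h2 : ∀ j : Fin d, ∑ b : Bool, Real.exp (t * (sgn b * p j))
      ≤ 2 * Real.exp ((t * p j) ^ 2 / 2) := by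
    intro j
    have he : ∑ b : Bool, Real.exp (t * (sgn b * p j))
        = Real.exp (t * p j) + Real.exp (-(t * p j)) := by
      rw [Fintype.sum_bool]
      norm_num [sgn]
    rw [he]
    have hcosh := Real.cosh_le_exp_half_sq (t * p j)
    rw [Real.cosh_eq] at hcosh
    linarith
  calc ∏ j, ∑ b : Bool, Real.exp (t * (sgn b * p j))
      ≤ ∏ j : Fin d, 2 * Real.exp ((t * p j) ^ 2 / 2) := by
        refine Finset.prod_le_prod (fun j _ => ?_) (fun j _ => h2 j)
        positivity
    _ = 2 ^ d * Real.exp (∑ j, (t * p j) ^ 2 / 2) := by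
        rw [Finset.prod_mul_distrib, Finset.prod_const, ← Real.exp_sum]
        simp
    _ ≤ 2 ^ d * Real.exp (t ^ 2 / 2) := by
        gcongr
        have : ∑ j, (t * p j) ^ 2 / 2 = t ^ 2 / 2 * ∑ j, p j ^ 2 := by
          rw [Finset.mul_sum]; congr 1; ext j; ring
        rw [this]
        nlinarith [sq_nonneg t, Finset.sum_nonneg (fun j (_ : j ∈ univ) => sq_nonneg (p j))]

lemma rad_moment {d : ℕ} (p : Fin d → ℝ) (hp : ∑ j, p j ^ 2 ≤ 1) {k : ℕ} (hk : 1 ≤ k) :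
    ∑ s : Fin d → Bool, (∑ j, sgn (s j) * p j) ^ (2 * k)
      ≤ 2 ^ d * (2 * (2 * k * Real.exp 1) ^ k) := by
  have hk0 : (0:ℝ) < 2 * k := by positivity
  set t : ℝ := Real.sqrt (2 * k) with ht
  have ht2 : t ^ 2 = 2 * k := Real.sq_sqrt hk0.le
  have htpos : 0 < t := Real.sqrt_pos.2 hk0
  set X : (Fin d → Bool) → ℝ := fun s => ∑ j, sgn (s j) * p j with hX
  have key : ∀ x : ℝ, x ^ (2*k) * t ^ (2*k)
      ≤ ((2*k)! : ℝ) * (Real.exp (t*x) + Real.exp ((-t)*x)) := by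
    intro x
    have h1 : (t * |x|) ^ (2*k) / ((2*k)! : ℝ) ≤ Real.exp (t * |x|) := by
      refine le_trans ?_ (Real.sum_le_exp_of_nonneg (by positivity) (2*k+1))
      exact Finset.single_le_sum (f := fun i => (t*|x|)^i / (i)!)
        (fun i _ => by positivity) (Finset.self_mem_range_succ (2*k))
    have h2 : Real.exp (t * |x|) ≤ Real.exp (t*x) + Real.exp ((-t)*x) := by
      rcases abs_cases x with ⟨h, _⟩ | ⟨h, _⟩
      · rw [h]
        nlinarith [Real.exp_pos ((-t)*x)]
      · rw [h]
        have : t * -x = (-t) * x := by ring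
        rw [this]
        nlinarith [Real.exp_pos (t*x)]
    have h3 : x ^ (2*k) * t ^ (2*k) = (t * |x|) ^ (2*k) := by
      rw [mul_pow]
      have : |x| ^ (2*k) = x ^ (2*k) := by
        rw [pow_abs, abs_of_nonneg ((even_two_mul k).pow_nonneg x)]
      rw [this]; ring
    have hfp : (0:ℝ) < ((2*k)! : ℝ) := by positivity
    rw [h3]
    calc (t * |x|) ^ (2*k) = ((t * |x|) ^ (2*k) / ((2*k)! : ℝ)) * ((2*k)! : ℝ) := by
          field_simp
      _ ≤ Real.exp (t * |x|) * ((2*k)! : ℝ) := by gcongr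
      _ ≤ ((2*k)! : ℝ) * (Real.exp (t*x) + Real.exp ((-t)*x)) := by
          rw [mul_comm]; gcongr
  have hsum : (∑ s : Fin d → Bool, X s ^ (2*k)) * t ^ (2*k)
      ≤ ((2*k)! : ℝ) * (2 ^ d * Real.exp (t^2/2) + 2 ^ d * Real.exp (t^2/2)) := by
    rw [Finset.sum_mul]
    calc ∑ s : Fin d → Bool, X s ^ (2*k) * t ^ (2*k)
        ≤ ∑ s : Fin d → Bool, ((2*k)! : ℝ) * (Real.exp (t * X s) + Real.exp ((-t) * X s)) :=
          Finset.sum_le_sum (fun s _ => key (X s))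
      _ = ((2*k)! : ℝ) * ((∑ s : Fin d → Bool, Real.exp (t * X s))
            + ∑ s : Fin d → Bool, Real.exp ((-t) * X s)) := by
          rw [← Finset.mul_sum, Finset.sum_add_distrib]
      _ ≤ ((2*k)! : ℝ) * (2 ^ d * Real.exp (t^2/2) + 2 ^ d * Real.exp (t^2/2)) := by
          have hb1 := mgf_bound p hp t
          have hb2 := mgf_bound p hp (-t)
          rw [neg_sq] at hb2
          gcongr
  -- now conclude
  have hB : t ^ (2*k) = (2*(k:ℝ)) ^ k := by rw [pow_mul, ht2]
  have hBpos : (0:ℝ) < (2*(k:ℝ)) ^ k := by positivity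
  have hfact : ((2*k)! : ℝ) ≤ (2*(k:ℝ)) ^ (2*k) := by
    have := Nat.factorial_le_pow (2*k)
    have h2 : ((2*k : ℕ) : ℝ) ^ (2*k) = (2*(k:ℝ)) ^ (2*k) := by push_cast; ring_nf
    calc ((2*k)! : ℝ) ≤ ((2*k : ℕ) : ℝ) ^ (2*k) := by exact_mod_cast this
      _ = (2*(k:ℝ)) ^ (2*k) := h2
  have hexpk : Real.exp (t^2/2) = Real.exp 1 ^ k := by
    rw [ht2]
    have : (2 * (k:ℝ)) / 2 = (k:ℝ) := by ring
    rw [this, ← Real.exp_nat_mul, mul_one]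
  have hEpos : (0:ℝ) < Real.exp 1 ^ k := by positivity
  have hmain : (∑ s : Fin d → Bool, X s ^ (2*k)) * (2*(k:ℝ))^k
      ≤ ((2*(k:ℝ))^k * (2 ^ d * (2 * Real.exp 1 ^ k))) * (2*(k:ℝ))^k := by
    rw [← hB]
    refine hsum.trans ?_
    rw [hexpk, hB]
    have h4 : (2*(k:ℝ))^(2*k) = (2*(k:ℝ))^k * (2*(k:ℝ))^k := by
      rw [← pow_add]; congr 1; omega
    rw [h4] at hfact
    calc ((2*k)! : ℝ) * (2 ^ d * Real.exp 1 ^ k + 2 ^ d * Real.exp 1 ^ k)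
        = (2 ^ d * (2 * Real.exp 1 ^ k)) * ((2*k)! : ℝ) := by ring
      _ ≤ (2 ^ d * (2 * Real.exp 1 ^ k)) * ((2*(k:ℝ))^k * (2*(k:ℝ))^k) :=
          mul_le_mul_of_nonneg_left hfact (by positivity)
      _ = ((2*(k:ℝ))^k * (2 ^ d * (2 * Real.exp 1 ^ k))) * (2*(k:ℝ))^k := by ring
  have hfin := le_of_mul_le_mul_right hmain hBpos
  calc ∑ s : Fin d → Bool, (∑ j, sgn (s j) * p j) ^ (2 * k)
      = ∑ s : Fin d → Bool, X s ^ (2*k) := rfl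
    _ ≤ (2*(k:ℝ))^k * (2 ^ d * (2 * Real.exp 1 ^ k)) := hfin
    _ = 2 ^ d * (2 * (2 * (k:ℝ) * Real.exp 1) ^ k) := by
        rw [mul_pow]; ring

noncomputable def pt (d : ℕ) (s : Fin d → Bool) : EuclideanSpace ℂ (Fin d) :=
  WithLp.toLp 2 (fun j => ((sgn (s j) / Real.sqrt d : ℝ) : ℂ))

lemma norm_pt {d : ℕ} (hd : 2 ≤ d) (s : Fin d → Bool) : ‖pt d s‖ = 1 := by
  have hd0 : (0:ℝ) < d := by positivity
  rw [EuclideanSpace.norm_eq]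
  have : ∀ j, ‖pt d s j‖ ^ 2 = 1 / d := by
    intro j
    rw [pt]
    rw [Complex.norm_real, Real.norm_eq_abs]
    rw [sq_abs, div_pow, sgn_sq, Real.sq_sqrt hd0.le]
  rw [Finset.sum_congr rfl (fun j _ => this j)]
  rw [Finset.sum_const, Finset.card_univ, Fintype.card_fin]
  rw [nsmul_eq_mul, mul_one_div, div_self (ne_of_gt hd0), Real.sqrt_one]

lemma neg_pt {d : ℕ} (s : Fin d → Bool) : -pt d s = pt d (fun j => !(s j)) := by
  ext j
  show -(pt d s j) = _
  rw [pt, pt]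
  push_cast
  congr 1
  cases s j <;> simp [sgn] <;> ring

lemma inner_pt {d : ℕ} (a : EuclideanSpace ℂ (Fin d)) (s : Fin d → Bool) :
    (inner ℂ a (pt d s) : ℂ)
      = ∑ j, (starRingEnd ℂ (a j)) * ((sgn (s j) / Real.sqrt d : ℝ) : ℂ) := by
  rw [PiLp.inner_apply]
  refine Finset.sum_congr rfl fun j _ => ?_
  simp only [RCLike.inner_apply, pt, PiLp.toLp_apply]
  ring

lemma cplx_moment {d : ℕ} (hd : 2 ≤ d) (a : EuclideanSpace ℂ (Fin d)) (ha : ‖a‖ = 1)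
    {k : ℕ} (hk : 1 ≤ k) :
    (2^d : ℝ)⁻¹ * ∑ s : Fin d → Bool, ‖(inner ℂ a (pt d s) : ℂ)‖ ^ (2*k)
      ≤ (16 * Real.exp 1 * k / d) ^ k := by
  have hd0 : (0:ℝ) < d := by positivity
  have hsd : (0:ℝ) < Real.sqrt d := Real.sqrt_pos.2 hd0
  set p : Fin d → ℝ := fun j => (a j).re with hp
  set q : Fin d → ℝ := fun j => -((a j).im) with hq
  set X : (Fin d → Bool) → ℝ := fun s => ∑ j, sgn (s j) * p j with hX
  set Y : (Fin d → Bool) → ℝ := fun s => ∑ j, sgn (s j) * q j with hY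
  -- sum of squares of coordinates is 1
  have hsum1 : ∑ j, (p j ^ 2 + q j ^ 2) = 1 := by
    have h1 : ∀ j, p j ^ 2 + q j ^ 2 = ‖a j‖ ^ 2 := by
      intro j
      rw [hp, hq]
      rw [Complex.sq_norm, Complex.normSq_apply]
      ring
    rw [Finset.sum_congr rfl (fun j _ => h1 j)]
    have h3 : Real.sqrt (∑ j, ‖a j‖ ^ 2) = 1 := by
      rw [← EuclideanSpace.norm_eq, ha]
    have h4 := congrArg (fun x : ℝ => x ^ 2) h3
    simp only [Real.sq_sqrt (Finset.sum_nonneg fun j _ => sq_nonneg ‖a j‖)] at h4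
    simpa using h4
  have hpsum : ∑ j, p j ^ 2 ≤ 1 := by
    rw [← hsum1]
    exact Finset.sum_le_sum fun j _ => by nlinarith [sq_nonneg (q j)]
  have hqsum : ∑ j, q j ^ 2 ≤ 1 := by
    rw [← hsum1]
    exact Finset.sum_le_sum fun j _ => by nlinarith [sq_nonneg (p j)]
  have hnorm : ∀ s : Fin d → Bool, ‖(inner ℂ a (pt d s) : ℂ)‖ ^ (2*k)
      = ((X s ^ 2 + Y s ^ 2) / d) ^ k := by
    intro s
    have hre : (inner ℂ a (pt d s) : ℂ).re = X s / Real.sqrt d := by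
      rw [inner_pt, Complex.re_sum, hX]
      rw [Finset.sum_div]
      refine Finset.sum_congr rfl fun j _ => ?_
      simp only [Complex.mul_re, Complex.ofReal_re, Complex.ofReal_im, mul_zero, sub_zero,
        Complex.conj_re, Complex.conj_im, hp]
      ring
    have him : (inner ℂ a (pt d s) : ℂ).im = Y s / Real.sqrt d := by
      rw [inner_pt, Complex.im_sum, hY]
      rw [Finset.sum_div]
      refine Finset.sum_congr rfl fun j _ => ?_
      simp only [Complex.mul_im, Complex.ofReal_re, Complex.ofReal_im, mul_zero, zero_add,
        add_zero, Complex.conj_re, Complex.conj_im, hq]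
      ring
    have hsq : ‖(inner ℂ a (pt d s) : ℂ)‖ ^ 2 = (X s ^ 2 + Y s ^ 2) / d := by
      rw [Complex.sq_norm, Complex.normSq_apply, hre, him]
      have e1 : X s/Real.sqrt d * (X s/Real.sqrt d) = X s^2 / d := by
        rw [_root_.div_mul_div_comm, Real.mul_self_sqrt hd0.le]; ring_nf
      have e2 : Y s/Real.sqrt d * (Y s/Real.sqrt d) = Y s^2 / d := by
        rw [_root_.div_mul_div_comm, Real.mul_self_sqrt hd0.le]; ring_nf
      rw [e1, e2, ← add_div]
    rw [pow_mul, hsq]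
  have hkey : ∀ s : Fin d → Bool, ((X s ^ 2 + Y s ^ 2) / d) ^ k
      ≤ (2 ^ k * (X s ^ (2*k) + Y s ^ (2*k))) / d ^ k := by
    intro s
    rw [div_pow]
    gcongr
    rcases le_total (X s ^ 2) (Y s ^ 2) with h | h
    · calc (X s ^ 2 + Y s ^ 2) ^ k ≤ (2 * Y s ^ 2) ^ k := by
            refine pow_le_pow_left₀ (by positivity) (by linarith) k
        _ = 2 ^ k * (Y s ^ 2) ^ k := mul_pow 2 _ k
        _ ≤ 2 ^ k * (X s ^ (2*k) + Y s ^ (2*k)) := by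
            rw [← pow_mul]
            have hx : (0:ℝ) ≤ X s ^ (2*k) := (even_two_mul k).pow_nonneg _
            nlinarith [pow_pos (by norm_num : (0:ℝ) < 2) k]
    · calc (X s ^ 2 + Y s ^ 2) ^ k ≤ (2 * X s ^ 2) ^ k := by
            refine pow_le_pow_left₀ (by positivity) (by linarith) k
        _ = 2 ^ k * (X s ^ 2) ^ k := mul_pow 2 _ k
        _ ≤ 2 ^ k * (X s ^ (2*k) + Y s ^ (2*k)) := by
            rw [← pow_mul]
            have hy : (0:ℝ) ≤ Y s ^ (2*k) := (even_two_mul k).pow_nonneg _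
            nlinarith [pow_pos (by norm_num : (0:ℝ) < 2) k]
  have hX2 := rad_moment p hpsum hk
  have hY2 := rad_moment q hqsum hk
  have h2d : (0:ℝ) < 2 ^ d := by positivity
  have hchain : ∑ s : Fin d → Bool, ‖(inner ℂ a (pt d s) : ℂ)‖ ^ (2*k)
      ≤ 2 ^ d * (4 * (2 ^ k * (2 * k * Real.exp 1) ^ k / d ^ k)) := by
    calc ∑ s : Fin d → Bool, ‖(inner ℂ a (pt d s) : ℂ)‖ ^ (2*k)
        = ∑ s : Fin d → Bool, ((X s ^ 2 + Y s ^ 2) / d) ^ k :=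
          Finset.sum_congr rfl fun s _ => hnorm s
      _ ≤ ∑ s : Fin d → Bool, (2 ^ k * (X s ^ (2*k) + Y s ^ (2*k))) / d ^ k :=
          Finset.sum_le_sum fun s _ => hkey s
      _ = (2 ^ k / d ^ k) * ((∑ s : Fin d → Bool, X s ^ (2*k))
            + ∑ s : Fin d → Bool, Y s ^ (2*k)) := by
          rw [← Finset.sum_add_distrib, Finset.mul_sum]
          refine Finset.sum_congr rfl fun s _ => ?_
          ring
      _ ≤ (2 ^ k / d ^ k) * (2 ^ d * (2 * (2 * k * Real.exp 1) ^ k)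
            + 2 ^ d * (2 * (2 * k * Real.exp 1) ^ k)) := by
          have hnn : (0:ℝ) ≤ 2 ^ k / d ^ k := by positivity
          exact mul_le_mul_of_nonneg_left (add_le_add hX2 hY2) hnn
      _ = 2 ^ d * (4 * (2 ^ k * (2 * k * Real.exp 1) ^ k / d ^ k)) := by
          field_simp
          ring
  calc (2^d : ℝ)⁻¹ * ∑ s : Fin d → Bool, ‖(inner ℂ a (pt d s) : ℂ)‖ ^ (2*k)
      ≤ (2^d : ℝ)⁻¹ * (2 ^ d * (4 * (2 ^ k * (2 * k * Real.exp 1) ^ k / d ^ k))) := by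
        exact mul_le_mul_of_nonneg_left hchain (by positivity)
    _ = 4 * ((4 * k * Real.exp 1) ^ k / d ^ k) := by
        rw [inv_mul_cancel_left₀ (ne_of_gt h2d)]
        rw [← mul_pow]
        ring_nf
    _ ≤ 4 ^ k * ((4 * k * Real.exp 1) ^ k / d ^ k) := by
        have : (4:ℝ) ≤ 4 ^ k := le_self_pow₀ (by norm_num) (by omega)
        have hnn : (0:ℝ) ≤ (4 * k * Real.exp 1) ^ k / d ^ k := by positivity
        exact mul_le_mul_of_nonneg_right this hnn
    _ = (16 * Real.exp 1 * k / d) ^ k := by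
        rw [← div_pow, ← mul_pow]
        congr 1
        ring

open scoped ENNReal

variable {d : ℕ}

noncomputable def cubeMeasure (d : ℕ) : Measure (EuclideanSpace ℂ (Fin d)) :=
  (((2:ℝ≥0∞)^d)⁻¹) • ∑ s : Fin d → Bool, Measure.dirac (pt d s)

lemma cubeMeasure_apply (A : Set (EuclideanSpace ℂ (Fin d))) (hA : MeasurableSet A) :
    cubeMeasure d A = (((2:ℝ≥0∞)^d)⁻¹) * ∑ s : Fin d → Bool,
      A.indicator (fun _ => (1:ℝ≥0∞)) (pt d s) := by
  rw [cubeMeasure, Measure.smul_apply, Measure.finset_sum_apply, smul_eq_mul]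
  congr 1
  exact Finset.sum_congr rfl fun s _ => by rw [Measure.dirac_apply' _ hA]; rfl

instance : IsProbabilityMeasure (cubeMeasure d) := by
  constructor
  rw [cubeMeasure_apply _ MeasurableSet.univ]
  simp only [Set.indicator_univ, Finset.sum_const, Finset.card_univ]
  rw [Fintype.card_fun, Fintype.card_bool, Fintype.card_fin, nsmul_eq_mul, mul_one]
  rw [Nat.cast_pow, Nat.cast_ofNat]
  rw [ENNReal.inv_mul_cancel (by positivity) (by simp)]

lemma cubeMeasure_compl_sphere (hd : 2 ≤ d) :
    cubeMeasure d {w : EuclideanSpace ℂ (Fin d) | ‖w‖ = 1}ᶜ = 0 := by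
  have hA : MeasurableSet {w : EuclideanSpace ℂ (Fin d) | ‖w‖ = 1}ᶜ :=
    (isClosed_eq (by fun_prop) continuous_const).measurableSet.compl
  rw [cubeMeasure_apply _ hA]
  have : ∀ s : Fin d → Bool,
      ({w : EuclideanSpace ℂ (Fin d) | ‖w‖ = 1}ᶜ).indicator (fun _ => (1:ℝ≥0∞)) (pt d s) = 0 := by
    intro s
    rw [Set.indicator_of_notMem]
    simp only [Set.mem_compl_iff, Set.mem_setOf_eq, not_not]
    exact norm_pt hd s
  rw [Finset.sum_congr rfl fun s _ => this s]
  simp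

lemma cubeMeasure_neg_invariant :
    Measure.map (fun w : EuclideanSpace ℂ (Fin d) => -w) (cubeMeasure d) = cubeMeasure d := by
  have hmeas : Measurable (fun w : EuclideanSpace ℂ (Fin d) => -w) := continuous_neg.measurable
  rw [cubeMeasure, ← Measure.mapₗ_apply_of_measurable hmeas]
  rw [LinearMap.map_smul, map_sum]
  congr 1
  rw [show (fun s : Fin d → Bool => Measure.mapₗ (fun w : EuclideanSpace ℂ (Fin d) => -w)
      (Measure.dirac (pt d s))) = fun s => Measure.dirac (pt d (fun j => !(s j))) from ?_]
  · have hinv : Function.Involutive (fun s : Fin d → Bool => fun j => !(s j)) :=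
      fun s => by funext j; simp
    exact hinv.bijective.sum_comp (fun s => Measure.dirac (pt d s))
  · funext s
    rw [Measure.mapₗ_apply_of_measurable hmeas, Measure.map_dirac' hmeas, ← neg_pt]

lemma integral_cubeMeasure (f : EuclideanSpace ℂ (Fin d) → ℝ) :
    ∫ w, f w ∂(cubeMeasure d) = (2^d : ℝ)⁻¹ * ∑ s : Fin d → Bool, f (pt d s) := by
  rw [cubeMeasure, integral_smul_measure]
  rw [integral_finset_sum_measure (fun s _ => ?_)]
  · rw [Finset.sum_congr rfl fun s _ => integral_dirac f (pt d s)]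
    rw [ENNReal.toReal_inv, ENNReal.toReal_pow, ENNReal.toReal_ofNat, smul_eq_mul]
  · have hae : f =ᵐ[Measure.dirac (pt d s)] (fun _ => f (pt d s)) := by
      rw [Filter.EventuallyEq, MeasureTheory.ae_dirac_eq]
      simp
    exact (integrable_const (f (pt d s))).congr hae.symm

end RMW

set_option maxHeartbeats 1000000 in
theorem random_measure_works_for_small_index :
    ∃ C : ℝ, 0 < C ∧
      ∀ (d : ℕ), 2 ≤ d →
        ∀ (G : Subgroup (EuclideanSpace ℂ (Fin d) ≃ₗᵢ[ℂ] EuclideanSpace ℂ (Fin d))),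
          Finite G →
          (((scalarSubgroup d).subgroupOf G).index : ℝ) ≤ Real.exp ((d : ℝ) / Real.log d) →
            ∃ μ : Measure (EuclideanSpace ℂ (Fin d)),
              IsProbabilityMeasure μ ∧
              μ {w | ‖w‖ = 1}ᶜ = 0 ∧
              Measure.map (fun w => -w) μ = μ ∧
              ∀ v : EuclideanSpace ℂ (Fin d), ‖v‖ = 1 →
                ∫ w, (⨆ g : G, ‖⟪(g : EuclideanSpace ℂ (Fin d) ≃ₗᵢ[ℂ]
                    EuclideanSpace ℂ (Fin d)) v, w⟫_ℂ‖ ^ 2) ∂μ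
                  ≤ C / Real.log d := by
  classical
  refine ⟨256, by norm_num, ?_⟩
  intro d hd G hG hidx
  refine ⟨RMW.cubeMeasure d, inferInstance, RMW.cubeMeasure_compl_sphere hd,
    RMW.cubeMeasure_neg_invariant, ?_⟩
  intro v hv
  have hd0 : (0:ℝ) < d := by positivity
  have hLpos : 0 < Real.log d := Real.log_pos (by exact_mod_cast hd)
  set L : ℝ := Real.log d with hL
  set k : ℕ := ⌈(d:ℝ)/L⌉₊ with hkdef
  have hk1 : 1 ≤ k := Nat.one_le_iff_ne_zero.2 (by
    have : 0 < k := Nat.ceil_pos.2 (by positivity)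
    omega)
  haveI : Nonempty ↥G := ⟨1⟩
  set H := (scalarSubgroup d).subgroupOf G with hH
  haveI : Finite (↥G ⧸ H) := Quotient.finite _
  haveI : Fintype (↥G ⧸ H) := Fintype.ofFinite _
  set a : (↥G ⧸ H) → EuclideanSpace ℂ (Fin d) := fun q => (((Quotient.out q : ↥G) :
    EuclideanSpace ℂ (Fin d) ≃ₗᵢ[ℂ] EuclideanSpace ℂ (Fin d)) v) with haq
  have ha : ∀ q, ‖a q‖ = 1 := fun q => by
    rw [haq]; simpa using hv
  set F : EuclideanSpace ℂ (Fin d) → ℝ := fun w => ⨆ g : G, ‖⟪(g : EuclideanSpace ℂ (Fin d) ≃ₗᵢ[ℂ]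
                    EuclideanSpace ℂ (Fin d)) v, w⟫_ℂ‖ ^ 2 with hF
  -- pointwise: F w ^ k bounded by sum over cosets
  have hFnn : ∀ w, 0 ≤ F w := fun w => Real.iSup_nonneg (fun g => sq_nonneg _)
  have hpoint : ∀ w : EuclideanSpace ℂ (Fin d), (F w) ^ k ≤ ∑ q : ↥G ⧸ H, ‖⟪a q, w⟫_ℂ‖ ^ (2*k) := by
    intro w
    have hrep : ∀ g : ↥G, ‖⟪(g : EuclideanSpace ℂ (Fin d) ≃ₗᵢ[ℂ]
        EuclideanSpace ℂ (Fin d)) v, w⟫_ℂ‖ = ‖⟪a (QuotientGroup.mk g), w⟫_ℂ‖ := by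
      intro g
      obtain ⟨h, hh⟩ := QuotientGroup.mk_out_eq_mul H g
      have hmem : ((h : ↥G) : EuclideanSpace ℂ (Fin d) ≃ₗᵢ[ℂ] EuclideanSpace ℂ (Fin d))
          ∈ scalarSubgroup d := Subgroup.mem_subgroupOf.mp h.2
      obtain ⟨c, hc1, hc2⟩ := hmem
      have hout : a (QuotientGroup.mk g) = c • ((g : EuclideanSpace ℂ (Fin d) ≃ₗᵢ[ℂ]
          EuclideanSpace ℂ (Fin d)) v) := by
        rw [haq]
        simp only [hh]
        have : (((g * (h : ↥G)) : ↥G) : EuclideanSpace ℂ (Fin d) ≃ₗᵢ[ℂ]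
            EuclideanSpace ℂ (Fin d)) v
            = (g : EuclideanSpace ℂ (Fin d) ≃ₗᵢ[ℂ] EuclideanSpace ℂ (Fin d))
              (((h : ↥G) : EuclideanSpace ℂ (Fin d) ≃ₗᵢ[ℂ]
                EuclideanSpace ℂ (Fin d)) v) := rfl
        rw [this, hc2 v, LinearIsometryEquiv.map_smul]
      rw [hout, inner_smul_left, norm_mul]
      have : ‖(starRingEnd ℂ) c‖ = 1 := by rwa [RCLike.norm_conj]
      rw [this, one_mul]
    obtain ⟨g0, hg0⟩ := Finite.exists_max (fun g : ↥G => ‖⟪(g : EuclideanSpace ℂ (Fin d) ≃ₗᵢ[ℂ]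
        EuclideanSpace ℂ (Fin d)) v, w⟫_ℂ‖ ^ 2)
    have hsup : F w ≤ ‖⟪a (QuotientGroup.mk g0), w⟫_ℂ‖ ^ 2 := by
      rw [hF]
      refine ciSup_le fun g => ?_
      rw [← hrep g0]
      exact hg0 g
    calc (F w) ^ k ≤ (‖⟪a (QuotientGroup.mk g0), w⟫_ℂ‖ ^ 2) ^ k :=
          pow_le_pow_left₀ (hFnn w) hsup k
      _ = ‖⟪a (QuotientGroup.mk g0), w⟫_ℂ‖ ^ (2*k) := by rw [← pow_mul]
      _ ≤ ∑ q : ↥G ⧸ H, ‖⟪a q, w⟫_ℂ‖ ^ (2*k) :=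
          Finset.single_le_sum (f := fun q : ↥G ⧸ H => ‖⟪a q, w⟫_ℂ‖ ^ (2*k))
            (fun q _ => by positivity) (Finset.mem_univ _)
  -- integral equals finite average
  rw [show ∫ w, (⨆ g : G, ‖⟪(g : EuclideanSpace ℂ (Fin d) ≃ₗᵢ[ℂ]
      EuclideanSpace ℂ (Fin d)) v, w⟫_ℂ‖ ^ 2) ∂(RMW.cubeMeasure d)
      = (2^d : ℝ)⁻¹ * ∑ s : Fin d → Bool, F (RMW.pt d s) from RMW.integral_cubeMeasure F]
  set P : ℝ := (2^d : ℝ)⁻¹ * ∑ s : Fin d → Bool, F (RMW.pt d s) with hP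
  have hPnn : 0 ≤ P := by
    rw [hP]
    have : (0:ℝ) ≤ ∑ s : Fin d → Bool, F (RMW.pt d s) :=
      Finset.sum_nonneg fun s _ => hFnn _
    positivity
  -- Jensen
  have hJensen : P ^ k ≤ (2^d : ℝ)⁻¹ * ∑ s : Fin d → Bool, (F (RMW.pt d s)) ^ k := by
    have hcvx := convexOn_pow (𝕜 := ℝ) k
    have hw : ∀ s ∈ (Finset.univ : Finset (Fin d → Bool)), (0:ℝ) ≤ (2^d : ℝ)⁻¹ :=
      fun _ _ => by positivity
    have hws : ∑ _s : Fin d → Bool, (2^d : ℝ)⁻¹ = 1 := by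
      rw [Finset.sum_const, Finset.card_univ, Fintype.card_fun, Fintype.card_bool,
        Fintype.card_fin, nsmul_eq_mul]
      push_cast
      rw [mul_inv_cancel₀ (by positivity)]
    have hmem : ∀ s ∈ (Finset.univ : Finset (Fin d → Bool)),
        F (RMW.pt d s) ∈ Set.Ici (0:ℝ) := fun s _ => hFnn _
    have := hcvx.map_sum_le hw hws hmem
    simp only [smul_eq_mul] at this
    calc P ^ k = (∑ s : Fin d → Bool, (2^d : ℝ)⁻¹ * F (RMW.pt d s)) ^ k := by
          rw [hP, Finset.mul_sum]
      _ ≤ ∑ s : Fin d → Bool, (2^d : ℝ)⁻¹ * (F (RMW.pt d s)) ^ k := this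
      _ = (2^d : ℝ)⁻¹ * ∑ s : Fin d → Bool, (F (RMW.pt d s)) ^ k := by
          rw [Finset.mul_sum]
  -- moment bound per coset
  have hN : ((Fintype.card (↥G ⧸ H) : ℝ)) ≤ Real.exp 1 ^ k := by
    have h1 : H.index = Fintype.card (↥G ⧸ H) := by
      rw [Subgroup.index_eq_card, Nat.card_eq_fintype_card]
    have h2 : ((d:ℝ)/L) ≤ k := Nat.le_ceil _
    calc ((Fintype.card (↥G ⧸ H) : ℝ)) = (H.index : ℝ) := by rw [h1]
      _ ≤ Real.exp ((d:ℝ)/L) := hidx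
      _ ≤ Real.exp k := Real.exp_le_exp.2 h2
      _ = Real.exp 1 ^ k := by rw [← Real.exp_nat_mul, mul_one]
  have hmom : P ^ k ≤ (Real.exp 1 * (16 * Real.exp 1 * k / d)) ^ k := by
    calc P ^ k ≤ (2^d : ℝ)⁻¹ * ∑ s : Fin d → Bool, (F (RMW.pt d s)) ^ k := hJensen
      _ ≤ (2^d : ℝ)⁻¹ * ∑ s : Fin d → Bool, ∑ q : ↥G ⧸ H, ‖⟪a q, RMW.pt d s⟫_ℂ‖ ^ (2*k) := by
          refine mul_le_mul_of_nonneg_left (Finset.sum_le_sum fun s _ => hpoint _) (by positivity)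
      _ = ∑ q : ↥G ⧸ H, (2^d : ℝ)⁻¹ * ∑ s : Fin d → Bool, ‖⟪a q, RMW.pt d s⟫_ℂ‖ ^ (2*k) := by
          rw [Finset.sum_comm, Finset.mul_sum]
      _ ≤ ∑ _q : ↥G ⧸ H, (16 * Real.exp 1 * k / d) ^ k :=
          Finset.sum_le_sum fun q _ => RMW.cplx_moment hd (a q) (ha q) hk1
      _ = (Fintype.card (↥G ⧸ H) : ℝ) * (16 * Real.exp 1 * k / d) ^ k := by
          rw [Finset.sum_const, Finset.card_univ, nsmul_eq_mul]
      _ ≤ Real.exp 1 ^ k * (16 * Real.exp 1 * k / d) ^ k :=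
          mul_le_mul_of_nonneg_right hN (by positivity)
      _ = (Real.exp 1 * (16 * Real.exp 1 * k / d)) ^ k := by rw [mul_pow]
  have hPle : P ≤ Real.exp 1 * (16 * Real.exp 1 * k / d) :=
    le_of_pow_le_pow_left₀ (by omega) (by positivity) hmom
  -- final arithmetic
  have hkle : (k:ℝ) ≤ 2 * d / L := by
    have h1 : (k:ℝ) < (d:ℝ)/L + 1 := Nat.ceil_lt_add_one (by positivity)
    have h2 : L ≤ (d:ℝ) := by
      have := Real.log_le_sub_one_of_pos hd0
      linarith
    have h3 : (1:ℝ) ≤ (d:ℝ)/L := (one_le_div hLpos).2 h2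
    calc (k:ℝ) ≤ (d:ℝ)/L + 1 := h1.le
      _ ≤ (d:ℝ)/L + (d:ℝ)/L := by linarith
      _ = 2 * d / L := by ring
  have hexp : Real.exp 1 < 2.7182818286 := Real.exp_one_lt_d9
  have hexp0 : 0 < Real.exp 1 := Real.exp_pos 1
  refine hPle.trans ?_
  have heq : Real.exp 1 * (16 * Real.exp 1 * (2 * (d:ℝ) / L) / d)
      = 32 * Real.exp 1 ^ 2 / L := by
    have he2 : Real.exp 1 ^ 2 = Real.exp 2 := by
      rw [← Real.exp_nat_mul]; norm_num
    field_simp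
    ring
  have h5 : Real.exp 1 * (16 * Real.exp 1 * (k:ℝ) / d) ≤ 32 * Real.exp 1 ^ 2 / L := by
    rw [← heq]
    gcongr
  refine h5.trans ?_
  have h6 : 32 * Real.exp 1 ^ 2 ≤ 256 := by nlinarith
  gcongr
end

section
/- Let G be a finite group with |G| ≥ 2. Then |Aut(G)| ≤ |G|^{log₂ |G|}; equivalently, log |Aut(G)| ≤ (log |G|)² / log 2. -/
lemma exists_small_gen_set (G : Type*) [Group G] [Finite G] :
    ∃ T : Finset G, Subgroup.closure (T : Set G) = ⊤ ∧ 2 ^ T.card ≤ Nat.card G := by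
  suffices h : ∀ n (S : Finset G),
      Nat.card G - Nat.card (Subgroup.closure (S : Set G)) ≤ n →
      2 ^ S.card ≤ Nat.card (Subgroup.closure (S : Set G)) →
      ∃ T : Finset G, Subgroup.closure (T : Set G) = ⊤ ∧ 2 ^ T.card ≤ Nat.card G by
    refine h (Nat.card G) ∅ (Nat.sub_le _ _) ?_
    simp [Subgroup.closure_empty]
  classical
  intro n
  induction n with
  | zero =>
    intro S h0 hS
    have hge : Nat.card G ≤ Nat.card (Subgroup.closure (S : Set G)) := by
      have := Subgroup.card_le_card_group (Subgroup.closure (S : Set G))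
      omega
    have htop : Subgroup.closure (S : Set G) = ⊤ :=
      Subgroup.eq_top_of_card_eq _ (le_antisymm (Subgroup.card_le_card_group _) hge)
    exact ⟨S, htop, by rwa [htop, Subgroup.card_top] at hS⟩
  | succ n ih =>
    intro S hle hS
    by_cases htop : Subgroup.closure (S : Set G) = ⊤
    · exact ⟨S, htop, by rwa [htop, Subgroup.card_top] at hS⟩
    · obtain ⟨x, hx⟩ : ∃ x, x ∉ Subgroup.closure (S : Set G) := by
        by_contra hc
        push_neg at hc
        exact htop (Subgroup.eq_top_iff' _ |>.2 hc)
      set H := Subgroup.closure (S : Set G) with hH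
      set K := Subgroup.closure ((insert x S : Finset G) : Set G) with hK
      have hHK : H ≤ K := by
        apply Subgroup.closure_mono
        intro y hy
        simp only [Finset.coe_insert, Set.mem_insert_iff]
        exact Or.inr hy
      have hxK : x ∈ K := Subgroup.subset_closure (by simp)
      have hne : H ≠ K := fun hEq => hx (hEq ▸ hxK)
      have hdvd : Nat.card H ∣ Nat.card K := Subgroup.card_dvd_of_le hHK
      have hpos : 0 < Nat.card H := Nat.card_pos
      have hcardne : Nat.card H ≠ Nat.card K := by
        intro hEq
        exact hne (Subgroup.eq_of_le_of_card_ge hHK (le_of_eq hEq.symm))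
      have h2 : 2 * Nat.card H ≤ Nat.card K := by
        obtain ⟨m, hm⟩ := hdvd
        have hKpos : 0 < Nat.card K := Nat.card_pos
        rcases m with _ | _ | m
        · omega
        · omega
        · rw [hm]
          calc 2 * Nat.card H = Nat.card H * 2 := by ring
            _ ≤ Nat.card H * (m + 2) := Nat.mul_le_mul_left _ (by omega)
      refine ih (insert x S) ?_ ?_
      · rw [← hK]
        have hlt : Nat.card H < Nat.card K := by omega
        omega
      · rw [← hK]
        calc 2 ^ (insert x S).card ≤ 2 ^ (S.card + 1) :=
              Nat.pow_le_pow_right (by norm_num) (Finset.card_insert_le _ _)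
          _ = 2 * 2 ^ S.card := by ring
          _ ≤ 2 * Nat.card H := by omega
          _ ≤ Nat.card K := h2

theorem card_aut_le (G : Type*) [Group G] [Finite G] (h : 2 ≤ Nat.card G) :
    (Nat.card (MulAut G) : ℝ) ≤ (Nat.card G : ℝ) ^ Real.logb 2 (Nat.card G) ∧
    Real.log (Nat.card (MulAut G)) ≤ (Real.log (Nat.card G)) ^ 2 / Real.log 2 := by
  obtain ⟨T, hTgen, hTcard⟩ := exists_small_gen_set G
  -- |Aut G| ≤ |G| ^ |T|
  have hinj : Function.Injective (fun (φ : MulAut G) (t : T) => φ t) := by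
    intro φ ψ hEq
    have : (φ : G →* G) = (ψ : G →* G) := by
      apply MonoidHom.eq_of_eqOn_dense hTgen
      intro y hy
      simpa using congrFun hEq ⟨y, hy⟩
    ext g
    exact DFunLike.congr_fun this g
  have hcard : Nat.card (MulAut G) ≤ Nat.card G ^ T.card := by
    calc Nat.card (MulAut G) ≤ Nat.card (T → G) := Nat.card_le_card_of_injective _ hinj
      _ = Nat.card G ^ Nat.card T := Nat.card_fun
      _ = Nat.card G ^ T.card := by rw [Nat.card_eq_finsetCard]
  have hn2 : (2 : ℝ) ≤ (Nat.card G : ℝ) := by exact_mod_cast h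
  have hn1 : (1 : ℝ) ≤ (Nat.card G : ℝ) := by linarith
  have hnpos : (0 : ℝ) < (Nat.card G : ℝ) := by linarith
  -- T.card ≤ logb 2 n
  have hexp : (T.card : ℝ) ≤ Real.logb 2 (Nat.card G) := by
    rw [Real.le_logb_iff_rpow_le (by norm_num) hnpos, Real.rpow_natCast]
    exact_mod_cast hTcard
  have h1 : (Nat.card (MulAut G) : ℝ) ≤ (Nat.card G : ℝ) ^ Real.logb 2 (Nat.card G) := by
    calc (Nat.card (MulAut G) : ℝ) ≤ (Nat.card G : ℝ) ^ (T.card : ℕ) := by exact_mod_cast hcard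
      _ = (Nat.card G : ℝ) ^ ((T.card : ℕ) : ℝ) := by rw [Real.rpow_natCast]
      _ ≤ (Nat.card G : ℝ) ^ Real.logb 2 (Nat.card G) := Real.rpow_le_rpow_of_exponent_le hn1 hexp
  refine ⟨h1, ?_⟩
  have hAutpos : (0 : ℝ) < (Nat.card (MulAut G) : ℝ) := by
    exact_mod_cast (Nat.card_pos : 0 < Nat.card (MulAut G))
  have hlog := Real.log_le_log hAutpos h1
  rw [Real.log_rpow hnpos, Real.logb, div_mul_eq_mul_div, ← sq] at hlog
  exact hlog
end

section
/- Let d ≥ 1 and let w ∈ ℝ^d be a unit vector. Then there exist a permutation π of {1, …, d} and signs ε₁, …, ε_d ∈ {−1, +1} such that Σ_{i=1}^d ε_i · w_{π(i)} / √i ≥ 1. Consequently, the transitive set X ⊂ S(ℝ^d) consisting of all vectors obtained from (1, 1/√2, …, 1/√d)/√(H_d) by permuting coordinates and changing signs arbitrarily satisfies sup_{x ∈ X} |⟨x, w⟩| ≥ 1/√(H_d) for every unit vector w, where H_d = Σ_{i=1}^d 1/i; hence the (log d)^{-1/2} bound in the main theorem is sharp up to a multiplicative constant. -/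
open scoped InnerProductSpace

lemma key_ineq (d : ℕ) (f : Fin d → ℝ) (hf : ∀ i, 0 ≤ f i)
    (hmono : ∀ i j : Fin d, i ≤ j → f j ≤ f i) :
    ∑ j : Fin d, f j ^ 2 ≤ (∑ i : Fin d, f i / Real.sqrt ((i : ℕ) + 1)) ^ 2 := by
  set t : Fin d → ℝ := fun i => f i / Real.sqrt ((i : ℕ) + 1) with ht
  have hs : ∀ i : Fin d, (0:ℝ) < Real.sqrt ((i : ℕ) + 1) := fun i =>
    Real.sqrt_pos.mpr (by positivity)
  have htn : ∀ i, 0 ≤ t i := fun i => div_nonneg (hf i) (hs i).le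
  have hsq : (∑ i, t i) ^ 2 = ∑ j : Fin d, t j * ∑ i : Fin d, t i := by
    rw [← Finset.sum_mul]; ring
  rw [hsq]
  refine Finset.sum_le_sum fun j _ => ?_
  have h1 : ∑ i ∈ Finset.Iic j, t i ≤ ∑ i : Fin d, t i :=
    Finset.sum_le_sum_of_subset_of_nonneg (Finset.subset_univ _) (fun i _ _ => htn i)
  have hsjsq : Real.sqrt ((j : ℕ) + 1) * Real.sqrt ((j : ℕ) + 1) = (j : ℕ) + 1 :=
    Real.mul_self_sqrt (by positivity)
  have h2 : Real.sqrt ((j : ℕ) + 1) * f j ≤ ∑ i ∈ Finset.Iic j, t i := by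
    have hbd : ∀ i ∈ Finset.Iic j, f j / Real.sqrt ((j : ℕ) + 1) ≤ t i := by
      intro i hi
      have hij : i ≤ j := Finset.mem_Iic.mp hi
      have hfi : f j ≤ f i := hmono i j hij
      have hsi : Real.sqrt ((i : ℕ) + 1) ≤ Real.sqrt ((j : ℕ) + 1) := by
        apply Real.sqrt_le_sqrt
        have hn : ((i : ℕ) : ℝ) ≤ ((j : ℕ) : ℝ) := Nat.cast_le.mpr (Fin.le_def.mp hij)
        linarith
      exact div_le_div₀ (hf i) hfi (hs i) hsi
    calc Real.sqrt ((j : ℕ) + 1) * f j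
        = (Finset.Iic j).card * (f j / Real.sqrt ((j : ℕ) + 1)) := by
          rw [Fin.card_Iic]
          push_cast
          rw [← hsjsq]
          field_simp
          rw [Real.sq_sqrt (by positivity), Real.sq_sqrt (by positivity)]
      _ ≤ ∑ i ∈ Finset.Iic j, t i := by
          have hle := Finset.card_nsmul_le_sum (Finset.Iic j) t
            (f j / Real.sqrt ((j : ℕ) + 1)) hbd
          simpa [nsmul_eq_mul] using hle
  have h3 : Real.sqrt ((j : ℕ) + 1) * f j ≤ ∑ i : Fin d, t i := h2.trans h1
  have heq : f j ^ 2 = t j * (Real.sqrt ((j : ℕ) + 1) * f j) := by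
    rw [ht]; field_simp
  rw [heq]
  exact mul_le_mul_of_nonneg_left h3 (htn j)

theorem sharpness_example (d : ℕ) (hd : 1 ≤ d)
    (w : EuclideanSpace ℝ (Fin d)) (hw : ‖w‖ = 1) :
    (∃ (π : Equiv.Perm (Fin d)) (ε : Fin d → ℝ), (∀ i, ε i = 1 ∨ ε i = -1) ∧
      1 ≤ ∑ i : Fin d, ε i * w (π i) / Real.sqrt ((i : ℕ) + 1)) ∧
    (∃ x : EuclideanSpace ℝ (Fin d),
      (∃ (σ : Equiv.Perm (Fin d)) (ε : Fin d → ℝ), (∀ i, ε i = 1 ∨ ε i = -1) ∧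
        ∀ i, x i = ε i / Real.sqrt ((σ i : ℕ) + 1) /
          Real.sqrt (∑ j : Fin d, 1 / ((j : ℕ) + 1 : ℝ))) ∧
      1 / Real.sqrt (∑ j : Fin d, 1 / ((j : ℕ) + 1 : ℝ)) ≤ |⟪x, w⟫_ℝ|) := by
  set σ : Equiv.Perm (Fin d) := Tuple.sort (fun i => -|w i|) with hσ
  have hmono : ∀ i j : Fin d, i ≤ j → |w (σ j)| ≤ |w (σ i)| := by
    intro i j hij
    have := Tuple.monotone_sort (fun i => -|w i|) hij
    simpa using this
  set ε : Fin d → ℝ := fun i => if w (σ i) < 0 then -1 else 1 with hε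
  have hεval : ∀ i, ε i = 1 ∨ ε i = -1 := by
    intro i; by_cases h : w (σ i) < 0 <;> simp [hε, h]
  have hεabs : ∀ i, ε i * w (σ i) = |w (σ i)| := by
    intro i
    by_cases h : w (σ i) < 0
    · simp [hε, h, abs_of_neg h]
    · simp [hε, h, abs_of_nonneg (not_lt.mp h)]
  have hnorm : ∑ i : Fin d, w i ^ 2 = 1 := by
    have h := EuclideanSpace.norm_eq w
    rw [hw] at h
    have := (Real.sqrt_eq_one.mp h.symm)
    simpa [Real.norm_eq_abs, sq_abs] using this
  have hsum2 : ∑ j : Fin d, |w (σ j)| ^ 2 = 1 := by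
    rw [← hnorm]
    have := Equiv.sum_comp σ (fun i => w i ^ 2)
    simpa [sq_abs] using this
  have hkey : (1:ℝ) ≤ (∑ i : Fin d, |w (σ i)| / Real.sqrt ((i : ℕ) + 1)) ^ 2 := by
    have hk := key_ineq d (fun i => |w (σ i)|) (fun i => abs_nonneg _)
      (fun i j hij => hmono i j hij)
    rw [hsum2] at hk
    exact hk
  have hSnn : 0 ≤ ∑ i : Fin d, |w (σ i)| / Real.sqrt ((i : ℕ) + 1) := by
    apply Finset.sum_nonneg; intro i _; positivity
  have hS : (1:ℝ) ≤ ∑ i : Fin d, |w (σ i)| / Real.sqrt ((i : ℕ) + 1) := by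
    nlinarith [hkey, hSnn]
  have hmain : (1:ℝ) ≤ ∑ i : Fin d, ε i * w (σ i) / Real.sqrt ((i : ℕ) + 1) := by
    calc (1:ℝ) ≤ ∑ i : Fin d, |w (σ i)| / Real.sqrt ((i : ℕ) + 1) := hS
      _ = ∑ i : Fin d, ε i * w (σ i) / Real.sqrt ((i : ℕ) + 1) := by
          refine Finset.sum_congr rfl fun i _ => ?_
          rw [hεabs]
  refine ⟨⟨σ, ε, hεval, hmain⟩, ?_⟩
  set H : ℝ := ∑ j : Fin d, 1 / ((j : ℕ) + 1 : ℝ) with hH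
  have hHpos : 0 < H := by
    rw [hH]
    have : Nonempty (Fin d) := Fin.pos_iff_nonempty.mp hd
    apply Finset.sum_pos
    · intro i _; positivity
    · exact Finset.univ_nonempty
  have hsH : 0 < Real.sqrt H := Real.sqrt_pos.mpr hHpos
  set x : EuclideanSpace ℝ (Fin d) :=
    WithLp.toLp 2 (fun i => ε (σ.symm i) / Real.sqrt ((σ.symm i : ℕ) + 1) / Real.sqrt H) with hx
  refine ⟨x, ⟨σ.symm, fun i => ε (σ.symm i), fun i => hεval _, fun i => rfl⟩, ?_⟩
  have hinner : ⟪x, w⟫_ℝ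
      = (∑ i : Fin d, ε i * w (σ i) / Real.sqrt ((i : ℕ) + 1)) / Real.sqrt H := by
    rw [PiLp.inner_apply]
    rw [Finset.sum_div]
    rw [← Equiv.sum_comp σ]
    refine Finset.sum_congr rfl fun i _ => ?_
    simp only [hx, PiLp.toLp_apply, Equiv.symm_apply_apply, RCLike.inner_apply, conj_trivial]
    ring
  have h1 : 1 / Real.sqrt H ≤ ⟪x, w⟫_ℝ := by
    rw [hinner]
    gcongr
  exact h1.trans (le_abs_self _)
end
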